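/- arXiv:1202.2968 — 6 statements merged into one kernel-verified Lean document; each statement's English description precedes it below -/
import Mathlib

section
/- For all natural numbers k ≥ 2 and l ≥ 2 there exists a finite simple graph G whose chromatic number is greater than k and whose girth (the length of a shortest cycle in G, valued in ℕ∞) is greater than l. -/
open Finset

namespace ErdosAux

variable {α : Type*} [DecidableEq α]

/-- weight of a graph `S` in the binomial model on ground set `E`. -/
def wt (E : Finset α) (p : ℚ) (S : Finset α) : ℚ :=
  p ^ S.card * (1 - p) ^ (E.card - S.card)

omit [DecidableEq α] in
lemma wt_nonneg {E : Finset α} {p : ℚ} (hp0 : 0 ≤ p) (hp1 : p ≤ 1) (S : Finset α) :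
    0 ≤ wt E p S := by
  have : (0:ℚ) ≤ 1 - p := by linarith
  exact mul_nonneg (pow_nonneg hp0 _) (pow_nonneg this _)

lemma sum_wt (E : Finset α) (p : ℚ) : ∑ S ∈ E.powerset, wt E p S = 1 := by
  have h := Finset.prod_add (fun _ : α => p) (fun _ : α => (1 - p)) E
  simp only [prod_const] at h
  have hE : ∀ S ∈ E.powerset, wt E p S = p ^ S.card * (1 - p) ^ (E \ S).card := by
    intro S hS
    rw [card_sdiff_of_subset (mem_powerset.mp hS)]
    rfl
  rw [Finset.sum_congr rfl hE, ← h]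
  norm_num

/-- Probability that a fixed set `T ⊆ E` of edges is fully present. -/
lemma sum_wt_superset {E T : Finset α} (hT : T ⊆ E) (p : ℚ) :
    ∑ S ∈ E.powerset.filter (fun S => T ⊆ S), wt E p S = p ^ T.card := by
  have key : ∑ S ∈ E.powerset.filter (fun S => T ⊆ S), wt E p S
      = ∑ S' ∈ (E \ T).powerset, p ^ T.card * wt (E \ T) p S' := by
    refine Finset.sum_nbij' (fun S => S \ T) (fun S' => S' ∪ T) ?_ ?_ ?_ ?_ ?_
    · intro S hS
      simp only [mem_filter, mem_powerset] at hS
      exact mem_powerset.mpr (sdiff_subset_sdiff hS.1 le_rfl)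
    · intro S' hS'
      simp only [mem_powerset] at hS'
      refine mem_filter.mpr ⟨mem_powerset.mpr ?_, subset_union_right⟩
      exact union_subset (hS'.trans sdiff_subset) hT
    · intro S hS
      simp only [mem_filter, mem_powerset] at hS
      exact sdiff_union_of_subset hS.2
    · intro S' hS'
      simp only [mem_powerset] at hS'
      have : Disjoint S' T := disjoint_of_subset_left hS' sdiff_disjoint
      exact union_sdiff_cancel_right this
    · intro S hS
      simp only [mem_filter, mem_powerset] at hS
      have hTS := hS.2
      have hSE := hS.1
      have hcard : (S \ T).card = S.card - T.card := card_sdiff_of_subset hTS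
      have hTle : T.card ≤ S.card := card_le_card hTS
      have hSle : S.card ≤ E.card := card_le_card hSE
      have hcardE : (E \ T).card = E.card - T.card := card_sdiff_of_subset hT
      unfold wt
      rw [hcard, hcardE, ← mul_assoc, ← pow_add]
      congr 2
      · omega
      · omega
  rw [key, ← Finset.mul_sum, sum_wt, mul_one]

/-- Probability that a fixed set `T ⊆ E` of edges is fully absent. -/
lemma sum_wt_disjoint {E T : Finset α} (hT : T ⊆ E) (p : ℚ) :
    ∑ S ∈ E.powerset.filter (fun S => Disjoint S T), wt E p S = (1 - p) ^ T.card := by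
  have hset : E.powerset.filter (fun S => Disjoint S T) = (E \ T).powerset := by
    ext S
    simp only [mem_filter, mem_powerset, subset_sdiff]
  have key : ∀ S ∈ (E \ T).powerset, wt E p S = (1 - p) ^ T.card * wt (E \ T) p S := by
    intro S hS
    simp only [mem_powerset] at hS
    have h1 : S.card ≤ (E \ T).card := card_le_card hS
    have hcardE : (E \ T).card = E.card - T.card := card_sdiff_of_subset hT
    have h2 : T.card ≤ E.card := card_le_card hT
    unfold wt
    rw [mul_left_comm]
    congr 1
    rw [← pow_add]
    congr 1
    omega
  rw [hset, Finset.sum_congr rfl key, ← Finset.mul_sum, sum_wt, mul_one]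


/-- first moment for "all of `TT x` present" counts. -/
lemma expectation_superset {β : Type*} [DecidableEq β] {E : Finset α} (X : Finset β)
    (TT : β → Finset α) (hTT : ∀ x ∈ X, TT x ⊆ E) (p : ℚ) :
    ∑ S ∈ E.powerset, wt E p S * ((X.filter (fun x => TT x ⊆ S)).card : ℚ)
      = ∑ x ∈ X, p ^ (TT x).card := by
  have hcard : ∀ S : Finset α, ((X.filter (fun x => TT x ⊆ S)).card : ℚ)
      = ∑ x ∈ X, (if TT x ⊆ S then (1:ℚ) else 0) := by
    intro S
    rw [Finset.card_filter]
    push_cast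
    rfl
  calc ∑ S ∈ E.powerset, wt E p S * ((X.filter (fun x => TT x ⊆ S)).card : ℚ)
      = ∑ S ∈ E.powerset, ∑ x ∈ X, (if TT x ⊆ S then wt E p S else 0) := by
        refine Finset.sum_congr rfl fun S _ => ?_
        rw [hcard, Finset.mul_sum]
        refine Finset.sum_congr rfl fun x _ => ?_
        split <;> simp
    _ = ∑ x ∈ X, ∑ S ∈ E.powerset, (if TT x ⊆ S then wt E p S else 0) := Finset.sum_comm
    _ = ∑ x ∈ X, p ^ (TT x).card := by
        refine Finset.sum_congr rfl fun x hx => ?_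
        rw [← Finset.sum_filter]
        exact sum_wt_superset (hTT x hx) p

/-- first moment for "all of `TT x` absent" counts. -/
lemma expectation_disjoint {β : Type*} [DecidableEq β] {E : Finset α} (X : Finset β)
    (TT : β → Finset α) (hTT : ∀ x ∈ X, TT x ⊆ E) (p : ℚ) :
    ∑ S ∈ E.powerset, wt E p S * ((X.filter (fun x => Disjoint S (TT x))).card : ℚ)
      = ∑ x ∈ X, (1 - p) ^ (TT x).card := by
  have hcard : ∀ S : Finset α, ((X.filter (fun x => Disjoint S (TT x))).card : ℚ)
      = ∑ x ∈ X, (if Disjoint S (TT x) then (1:ℚ) else 0) := by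
    intro S
    rw [Finset.card_filter]
    push_cast
    rfl
  calc ∑ S ∈ E.powerset, wt E p S * ((X.filter (fun x => Disjoint S (TT x))).card : ℚ)
      = ∑ S ∈ E.powerset, ∑ x ∈ X, (if Disjoint S (TT x) then wt E p S else 0) := by
        refine Finset.sum_congr rfl fun S _ => ?_
        rw [hcard, Finset.mul_sum]
        refine Finset.sum_congr rfl fun x _ => ?_
        split <;> simp
    _ = ∑ x ∈ X, ∑ S ∈ E.powerset, (if Disjoint S (TT x) then wt E p S else 0) := Finset.sum_comm
    _ = ∑ x ∈ X, (1 - p) ^ (TT x).card := by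
        refine Finset.sum_congr rfl fun x hx => ?_
        rw [← Finset.sum_filter]
        exact sum_wt_disjoint (hTT x hx) p


section Walks
variable {V : Type*} {G : SimpleGraph V}


lemma getVert_eq_support_getElem {u v : V} (p : G.Walk u v) {n : ℕ} (h : n ≤ p.length) :
    p.getVert n = p.support[n]'(by rw [SimpleGraph.Walk.length_support]; omega) := by
  induction p generalizing n with
  | nil =>
    simp only [SimpleGraph.Walk.length_nil, Nat.le_zero] at h
    subst h
    simp
  | cons h' q ih =>
    cases n with
    | zero => simp [SimpleGraph.Walk.getVert]
    | succ m =>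
      simp only [SimpleGraph.Walk.length_cons] at h
      rw [SimpleGraph.Walk.getVert_cons_succ, ih (by omega)]
      simp

lemma cycle_getVert_injOn {u : V} {c : G.Walk u u} (hc : c.IsCycle) {m n : ℕ}
    (hm : m < c.length) (hn : n < c.length) (h : c.getVert m = c.getVert n) : m = n := by
  have hnd : c.support.tail.Nodup := ((SimpleGraph.Walk.isCycle_def c).mp hc).2.2
  have hsup : c.support = u :: c.support.tail := by
    rw [← SimpleGraph.Walk.support_eq_cons]
  have hlen : c.support.length = c.length + 1 := SimpleGraph.Walk.length_support c
  have hlt : c.support.tail.length = c.length := by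
    rw [hsup] at hlen; simpa using hlen
  -- getVert i for 1 ≤ i ≤ length equals tail[i-1]
  have key : ∀ (i : ℕ) (_ : 1 ≤ i) (_ : i ≤ c.length),
      c.getVert i = c.support.tail[i-1]'(by omega) := by
    intro i h1 h2
    rw [getVert_eq_support_getElem c h2]
    have : c.support[i]'(by omega) = (u :: c.support.tail)[i]'(by rw [← hsup]; omega) := by
      congr 1
    rw [this]
    rcases Nat.exists_eq_add_of_le h1 with ⟨j, rfl⟩
    simp [Nat.add_comm 1 j]
  have hL : 1 ≤ c.length := by
    have := hc.three_le_length; omega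
  have huL : c.getVert c.length = u := SimpleGraph.Walk.getVert_length c
  rcases Nat.eq_zero_or_pos m with hm0 | hm1 <;> rcases Nat.eq_zero_or_pos n with hn0 | hn1
  · omega
  · -- m = 0 : getVert n = u = getVert length
    exfalso
    subst hm0
    rw [SimpleGraph.Walk.getVert_zero] at h
    have h1 : c.support.tail[n-1]'(by omega) = c.support.tail[c.length-1]'(by omega) := by
      rw [← key n hn1 (le_of_lt hn), ← key c.length hL le_rfl, huL, ← h]
    have := List.Nodup.getElem_inj_iff hnd |>.mp h1
    omega
  · exfalso
    subst hn0
    rw [SimpleGraph.Walk.getVert_zero] at h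
    have h1 : c.support.tail[m-1]'(by omega) = c.support.tail[c.length-1]'(by omega) := by
      rw [← key m hm1 (le_of_lt hm), ← key c.length hL le_rfl, huL, h]
    have := List.Nodup.getElem_inj_iff hnd |>.mp h1
    omega
  · have h1 : c.support.tail[m-1]'(by omega) = c.support.tail[n-1]'(by omega) := by
      rw [← key m hm1 (le_of_lt hm), ← key n hn1 (le_of_lt hn), h]
    have := List.Nodup.getElem_inj_iff hnd |>.mp h1
    omega


lemma edge_len_one {v u : V} {p : G.Walk v u} (hp : p.IsPath) (h : s(v, u) ∈ p.edges) :
    p.length = 1 := by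
  cases p with
  | nil => simp at h
  | @cons _ x _ h' q =>
    rw [SimpleGraph.Walk.edges_cons, List.mem_cons] at h
    rcases h with h | h
    · rw [Sym2.eq_iff] at h
      rcases h with ⟨-, rfl⟩ | ⟨rfl, rfl⟩
      · have hq : q.IsPath := hp.of_cons
        have : (⟨q, hq⟩ : G.Path _ _) = SimpleGraph.Path.nil := SimpleGraph.Path.loop_eq _
        have hqnil : q = SimpleGraph.Walk.nil := congrArg Subtype.val this
        subst hqnil
        simp
      · exact absurd rfl h'.ne
    · have hv := SimpleGraph.Walk.fst_mem_support_of_mem_edges q h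
      rw [SimpleGraph.Walk.cons_isPath_iff] at hp
      exact absurd hv hp.2

lemma parity_aux [DecidableEq V] (hG : G.IsAcyclic) {r u v : V} (hadj : G.Adj u v)
    (p : G.Path r u) (q : G.Path r v) : (p.val.length + q.val.length) % 2 = 1 := by
  by_cases hv : v ∈ p.val.support
  · have hp1 : (p.val.takeUntil v hv).IsPath := p.prop.takeUntil hv
    have hp2 : (p.val.dropUntil v hv).IsPath := p.prop.dropUntil hv
    have hq : q = ⟨p.val.takeUntil v hv, hp1⟩ := hG.path_unique q ⟨_, hp1⟩
    have hlen : (p.val.takeUntil v hv).length + (p.val.dropUntil v hv).length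
        = p.val.length := by
      rw [← SimpleGraph.Walk.length_append, SimpleGraph.Walk.take_spec]
    have hnc : ¬ (SimpleGraph.Walk.cons hadj (p.val.dropUntil v hv)).IsCycle := hG _
    rw [SimpleGraph.Walk.cons_isCycle_iff] at hnc
    push_neg at hnc
    have hmem := hnc hp2
    have h1 : (p.val.dropUntil v hv).length = 1 := by
      apply edge_len_one hp2
      rwa [Sym2.eq_swap]
    have hql : q.val.length = (p.val.takeUntil v hv).length := by rw [hq]
    omega
  · have hw : (p.val.concat hadj).IsPath := by
      rw [SimpleGraph.Walk.isPath_def, SimpleGraph.Walk.support_concat]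
      rw [List.nodup_append]
      refine ⟨p.prop.support_nodup, List.nodup_singleton v, ?_⟩
      intro a ha b hb
      rw [List.mem_singleton] at hb
      subst hb
      exact fun h => hv (h ▸ ha)
    have hq : q = ⟨p.val.concat hadj, hw⟩ := hG.path_unique q ⟨_, hw⟩
    have hql : q.val.length = p.val.length + 1 := by
      rw [hq]; exact SimpleGraph.Walk.length_concat _ _
    omega

lemma acyclic_colorable_two (hG : G.IsAcyclic) : G.Colorable 2 := by
  classical
  have hreach : ∀ v, G.Reachable ((G.connectedComponentMk v).out) v := fun v =>
    SimpleGraph.ConnectedComponent.exact (G.connectedComponentMk v).out_eq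
  let pth : ∀ v, G.Path ((G.connectedComponentMk v).out) v := fun v => ((hreach v).some).toPath
  have hcard : Fintype.card (ZMod 2) = 2 := rfl
  rw [← hcard]
  refine (SimpleGraph.Coloring.mk (fun v => ((pth v).val.length : ZMod 2)) ?_).colorable
  intro u v hadj heq
  have hroot : (G.connectedComponentMk v).out = (G.connectedComponentMk u).out := by
    rw [SimpleGraph.ConnectedComponent.sound hadj.reachable]
  let q : G.Path ((G.connectedComponentMk u).out) v :=
    ⟨((pth v).val.copy hroot rfl), by simp [(pth v).prop]⟩
  have hqlen : q.val.length = (pth v).val.length := by simp [q]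
  have hodd := parity_aux hG hadj (pth u) q
  rw [hqlen] at hodd
  have hmod := (ZMod.natCast_eq_natCast_iff _ _ _).mp heq
  unfold Nat.ModEq at hmod
  omega


end Walks

def Edges (n : ℕ) : Finset (Sym2 (Fin n)) := univ.filter (fun e => ¬ e.IsDiag)

def nxt {i : ℕ} (j : Fin i) : Fin i :=
  ⟨(j.1 + 1) % i, Nat.mod_lt _ (Nat.lt_of_le_of_lt (Nat.zero_le _) j.2)⟩

def cyc {i n : ℕ} (f : Fin i → Fin n) : Finset (Sym2 (Fin n)) :=
  univ.image (fun j => s(f j, f (nxt j)))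

def Cands (n l : ℕ) : Finset (Σ i : Fin (l+1), (Fin i.1 → Fin n)) :=
  univ.filter (fun x => 3 ≤ x.1.1 ∧ Function.Injective x.2)

def Fs (n l : ℕ) (S : Finset (Sym2 (Fin n))) : Finset (Σ i : Fin (l+1), (Fin i.1 → Fin n)) :=
  (Cands n l).filter (fun x => cyc x.2 ⊆ S)

def T2 {n : ℕ} (A : Finset (Fin n)) : Finset (Sym2 (Fin n)) := A.offDiag.image Sym2.mk.uncurry

def Is (n a : ℕ) (S : Finset (Sym2 (Fin n))) : Finset (Finset (Fin n)) :=
  ((univ : Finset (Fin n)).powersetCard a).filter (fun A => Disjoint S (T2 A))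

lemma nxt_ne {i : ℕ} (hi : 2 ≤ i) (j : Fin i) : nxt j ≠ j := by
  intro h
  have h' : (j.1 + 1) % i = j.1 := congrArg Fin.val h
  rcases Nat.lt_or_ge (j.1 + 1) i with hlt | hge
  · rw [Nat.mod_eq_of_lt hlt] at h'; omega
  · have hj := j.2
    have : j.1 + 1 = i := by omega
    rw [this, Nat.mod_self] at h'
    omega

lemma cyc_subset_edges {i n : ℕ} (hi : 2 ≤ i) {f : Fin i → Fin n}
    (hf : Function.Injective f) : cyc f ⊆ Edges n := by
  intro e he
  simp only [cyc, mem_image, mem_univ, true_and] at he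
  obtain ⟨j, rfl⟩ := he
  simp only [Edges, mem_filter, mem_univ, true_and, Sym2.isDiag_iff_proj_eq]
  intro h
  exact nxt_ne hi j (hf h.symm)

lemma card_cyc {i n : ℕ} (hi : 3 ≤ i) {f : Fin i → Fin n}
    (hf : Function.Injective f) : (cyc f).card = i := by
  rw [cyc, Finset.card_image_of_injective _ ?_, card_univ, Fintype.card_fin]
  intro j j' h
  rw [Sym2.eq_iff] at h
  rcases h with ⟨h1, h2⟩ | ⟨h1, h2⟩
  · exact hf h1
  · -- f j = f (nxt j'), f (nxt j) = f j'
    have e1 : j = nxt j' := hf h1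
    have e2 : nxt j = j' := hf h2
    -- then j' = nxt (nxt j') : contradiction for i ≥ 3 unless equal
    exfalso
    have hval : ((j'.1 + 1) % i + 1) % i = j'.1 := by
      have := congrArg Fin.val e2
      simp only [nxt] at this e1
      rw [congrArg Fin.val e1] at this
      simpa [nxt] using this
    have hj' := j'.2
    rcases Nat.lt_or_ge (j'.1 + 1) i with hlt | hge
    · rw [Nat.mod_eq_of_lt hlt] at hval
      rcases Nat.lt_or_ge (j'.1 + 2) i with hlt2 | hge2
      · rw [Nat.mod_eq_of_lt (by omega)] at hval; omega
      · have : j'.1 + 2 = i ∨ j'.1 + 2 = i + 1 := by omega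
        rcases this with h | h
        · rw [show j'.1 + 1 + 1 = i by omega, Nat.mod_self] at hval; omega
        · rw [show j'.1 + 1 + 1 = i + 1 by omega] at hval
          rw [Nat.add_mod_left] at hval
          rw [Nat.mod_eq_of_lt (by omega)] at hval
          omega
    · have : j'.1 + 1 = i := by omega
      rw [this, Nat.mod_self] at hval
      rw [Nat.mod_eq_of_lt (by omega)] at hval
      omega

lemma T2_subset_edges {n : ℕ} (A : Finset (Fin n)) : T2 A ⊆ Edges n := by
  intro e he
  simp only [T2, mem_image] at he
  obtain ⟨pr, hpr, rfl⟩ := he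
  simp only [mem_offDiag] at hpr
  simp only [Edges, mem_filter, mem_univ, true_and, Sym2.mk_isDiag_iff]
  exact hpr.2.2

lemma card_T2 {n a : ℕ} {A : Finset (Fin n)} (hA : A.card = a) : (T2 A).card = a.choose 2 := by
  rw [T2, Sym2.card_image_offDiag, hA]


set_option maxHeartbeats 2000000 in
lemma exists_good_S (k l s n a : ℕ) (hk : 2 ≤ k) (hl : 2 ≤ l)
    (hs : s = l * (1024 * k^2)^l) (hn : n = 16 * k^2 * s) (ha : a = 8 * k * s) :
    ∃ S ∈ (Edges n).powerset, 4 * (Fs n l S).card < n ∧ (Is n a S).card = 0 := by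
  have hs64 : 64 ≤ s := by
    have h1 : 64 ≤ 1024 * k^2 := by nlinarith
    have h2 : 1024 * k^2 ≤ (1024 * k^2)^l := Nat.le_self_pow (by omega) _
    have h3 : (1024 * k^2)^l ≤ l * (1024 * k^2)^l := Nat.le_mul_of_pos_left _ (by omega)
    omega
  have hspos : (0:ℚ) < (s:ℚ) := by
    have : (0:ℕ) < s := by omega
    exact_mod_cast this
  set p : ℚ := 64 / (s:ℚ) with hp_def
  have hp0 : 0 ≤ p := by positivity
  have hp1 : p ≤ 1 := by
    rw [hp_def, div_le_one hspos]
    exact_mod_cast hs64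
  -- expected number of cycle candidates
  have hTTc : ∀ x ∈ Cands n l, cyc x.2 ⊆ Edges n := by
    intro x hx
    simp only [Cands, mem_filter] at hx
    exact cyc_subset_edges (by omega) hx.2.2
  have E1 : ∑ S ∈ (Edges n).powerset, wt (Edges n) p S * ((Fs n l S).card : ℚ)
      = ∑ x ∈ Cands n l, p ^ (cyc x.2).card :=
    expectation_superset (Cands n l) (fun x => cyc x.2) hTTc p
  have hnp : (n:ℚ) * p = (1024 * k^2 : ℕ) := by
    rw [hp_def, hn]
    push_cast
    field_simp
    ring
  have bound1 : ∑ x ∈ Cands n l, p ^ (cyc x.2).card ≤ 2 * (s:ℚ) := by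
    have step1 : ∑ x ∈ Cands n l, p ^ (cyc x.2).card
        = ∑ x ∈ Cands n l, p ^ (x.1.1) := by
      refine Finset.sum_congr rfl fun x hx => ?_
      simp only [Cands, mem_filter] at hx
      rw [card_cyc hx.2.1 hx.2.2]
    have step2 : ∑ x ∈ Cands n l, p ^ (x.1.1)
        ≤ ∑ x ∈ (univ : Finset (Σ i : Fin (l+1), (Fin i.1 → Fin n))), p ^ (x.1.1) := by
      refine Finset.sum_le_sum_of_subset_of_nonneg (filter_subset _ _) ?_
      intro x _ _
      positivity
    have step3 : ∑ x ∈ (univ : Finset (Σ i : Fin (l+1), (Fin i.1 → Fin n))), p ^ (x.1.1)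
        = ∑ i ∈ (univ : Finset (Fin (l+1))), ((n:ℚ) * p) ^ (i.1) := by
      rw [← Finset.univ_sigma_univ, Finset.sum_sigma]
      refine Finset.sum_congr rfl fun i _ => ?_
      show (∑ _f : Fin i.1 → Fin n, p ^ i.1) = ((n:ℚ) * p) ^ i.1
      rw [Finset.sum_const, card_univ]
      have hcard : Fintype.card (Fin i.1 → Fin n) = n ^ i.1 := by
        simp [Fintype.card_fun]
      rw [hcard, nsmul_eq_mul, mul_pow]
      push_cast
      ring
    have step4 : ∑ i ∈ (univ : Finset (Fin (l+1))), ((n:ℚ) * p) ^ (i.1) ≤ 2 * (s:ℚ) := by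
      rw [hnp]
      have hterm : ∀ i ∈ (univ : Finset (Fin (l+1))),
          ((1024 * k^2 : ℕ) : ℚ) ^ (i.1) ≤ ((1024 * k^2 : ℕ) : ℚ) ^ l := by
        intro i _
        refine pow_le_pow_right₀ ?_ (by omega)
        have : (1:ℕ) ≤ 1024 * k^2 := by nlinarith
        exact_mod_cast this
      calc ∑ i ∈ (univ : Finset (Fin (l+1))), ((1024 * k^2 : ℕ) : ℚ) ^ (i.1)
          ≤ ∑ _i ∈ (univ : Finset (Fin (l+1))), ((1024 * k^2 : ℕ) : ℚ) ^ l :=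
            Finset.sum_le_sum hterm
        _ = (l+1) * ((1024 * k^2 : ℕ) : ℚ) ^ l := by
            rw [Finset.sum_const, card_univ, Fintype.card_fin, nsmul_eq_mul]
            push_cast; ring
        _ ≤ 2 * (s:ℚ) := by
            rw [hs]
            push_cast
            have hposq : (0:ℚ) ≤ ((1024:ℚ) * (k:ℚ)^2) ^ l := by positivity
            have : ((l:ℚ)+1) ≤ 2 * l := by
              have : (2:ℚ) ≤ (l:ℚ) := by exact_mod_cast hl
              linarith
            nlinarith
    linarith [step1, step2, step3, step4]
  -- expected number of independent sets
  have hTTi : ∀ A ∈ (univ : Finset (Fin n)).powersetCard a, T2 A ⊆ Edges n :=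
    fun A _ => T2_subset_edges A
  have E2 : ∑ S ∈ (Edges n).powerset, wt (Edges n) p S * ((Is n a S).card : ℚ)
      = ∑ A ∈ (univ : Finset (Fin n)).powersetCard a, (1 - p) ^ (T2 A).card :=
    expectation_disjoint _ T2 hTTi p
  -- the analytic bound (1-p)^M ≤ (1/4)^n
  set M : ℕ := a.choose 2 with hM_def
  have hsnM : s * n ≤ M := by
    have hks : 1 ≤ k * s := Nat.one_le_iff_ne_zero.mpr (Nat.mul_ne_zero (by omega) (by omega))
    obtain ⟨m, hm⟩ : ∃ m, k * s = m + 1 := ⟨k * s - 1, by omega⟩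
    have haeq : M = 4 * (k * s) * (8 * (k * s) - 1) := by
      rw [hM_def, ha, Nat.choose_two_right]
      rw [show 8 * k * s = 8 * (k * s) by ring, hm]
      rw [show 8 * (m + 1) - 1 = 8 * m + 7 by omega]
      rw [show 8 * (m + 1) * (8 * m + 7) = 2 * (4 * (m + 1) * (8 * m + 7)) by ring,
        Nat.mul_div_cancel_left _ (by norm_num : 0 < 2)]
    calc s * n = 16 * (k * s)^2 := by rw [hn]; ring
      _ = 16 * (m + 1)^2 := by rw [hm]
      _ ≤ 4 * (m + 1) * (8 * (m + 1) - 1) := by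
          rw [show 8 * (m + 1) - 1 = 8 * m + 7 by omega]
          nlinarith
      _ = 4 * (k * s) * (8 * (k * s) - 1) := by rw [hm]
      _ = M := haeq.symm
  have hq_bound : (1 - p) ^ M ≤ (1/4 : ℚ) ^ n := by
    have h1p : (1:ℚ) ≤ 1 + p := by linarith
    have hB1 : (4:ℚ) ≤ (1 + p) ^ s := by
      have := one_add_mul_le_pow (by linarith : (-2:ℚ) ≤ p) s
      have hsp : (s:ℚ) * p = 64 := by
        rw [hp_def]
        field_simp
      linarith
    have hB2 : (4:ℚ)^n ≤ (1 + p) ^ M := by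
      calc (4:ℚ)^n ≤ ((1 + p) ^ s) ^ n := by
            exact pow_le_pow_left₀ (by norm_num) hB1 n
        _ = (1 + p) ^ (s * n) := by rw [← pow_mul]
        _ ≤ (1 + p) ^ M := pow_le_pow_right₀ h1p hsnM
    have hB3 : (1 - p) ^ M * (1 + p) ^ M ≤ 1 := by
      rw [← mul_pow]
      have h0 : 0 ≤ (1 - p) * (1 + p) := by nlinarith
      have h1 : (1 - p) * (1 + p) ≤ 1 := by nlinarith
      exact pow_le_one₀ h0 h1
    have hpow_pos : (0:ℚ) < (1 + p) ^ M := by positivity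
    have h4pos : (0:ℚ) < (4:ℚ)^n := by positivity
    have hle : (1 - p) ^ M ≤ 1 / (1 + p) ^ M := by
      rw [le_div_iff₀ hpow_pos]
      exact hB3
    calc (1 - p) ^ M ≤ 1 / (1 + p) ^ M := hle
      _ ≤ 1 / (4:ℚ)^n := by
          apply one_div_le_one_div_of_le h4pos hB2
      _ = (1/4:ℚ)^n := by rw [one_div_pow]
  have bound2 : ∑ A ∈ (univ : Finset (Fin n)).powersetCard a, (1 - p) ^ (T2 A).card
      ≤ (2:ℚ)^n * (1/4:ℚ)^n := by
    have hterm : ∀ A ∈ (univ : Finset (Fin n)).powersetCard a,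
        (1 - p) ^ (T2 A).card ≤ (1/4:ℚ)^n := by
      intro A hA
      rw [Finset.mem_powersetCard] at hA
      rw [card_T2 hA.2, ← hM_def]
      exact hq_bound
    calc ∑ A ∈ (univ : Finset (Fin n)).powersetCard a, (1 - p) ^ (T2 A).card
        ≤ ∑ _A ∈ (univ : Finset (Fin n)).powersetCard a, (1/4:ℚ)^n :=
          Finset.sum_le_sum hterm
      _ = (n.choose a : ℚ) * (1/4:ℚ)^n := by
          rw [Finset.sum_const, Finset.card_powersetCard, card_univ, Fintype.card_fin,
            nsmul_eq_mul]
      _ ≤ (2:ℚ)^n * (1/4:ℚ)^n := by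
          have hch : n.choose a ≤ 2^n := by
            calc n.choose a ≤ ∑ i ∈ range (n+1), n.choose i := by
                  rcases Nat.lt_or_ge n a with hna | hna
                  · rw [Nat.choose_eq_zero_of_lt hna]; positivity
                  · exact Finset.single_le_sum (fun i _ => Nat.zero_le _)
                      (Finset.mem_range.mpr (by omega))
              _ = 2^n := Nat.sum_range_choose n
          have : ((n.choose a : ℕ) : ℚ) ≤ ((2^n : ℕ) : ℚ) := by exact_mod_cast hch
          have h14 : (0:ℚ) ≤ (1/4:ℚ)^n := by positivity
          push_cast at this
          nlinarith
  -- combine via Markov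
  by_contra hcon
  push_neg at hcon
  have hall : ∀ S ∈ (Edges n).powerset,
      (n:ℚ) ≤ wt (Edges n) p S * (n:ℚ) → True := fun _ _ _ => trivial
  have hPhi : ∀ S ∈ (Edges n).powerset,
      (n:ℚ) ≤ 4 * ((Fs n l S).card : ℚ) + (n:ℚ) * ((Is n a S).card : ℚ) := by
    intro S hS
    have h := hcon S hS
    rcases Nat.eq_zero_or_pos (Is n a S).card with hI | hI
    · have h4 : ¬ (4 * (Fs n l S).card < n) := fun hlt => (h hlt) hI
      have hle : (n:ℕ) ≤ 4 * (Fs n l S).card := Nat.le_of_not_lt h4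
      have hc : ((n:ℕ):ℚ) ≤ ((4 * (Fs n l S).card : ℕ) : ℚ) := by exact_mod_cast hle
      push_cast at hc
      rw [hI]
      push_cast
      linarith
    · have hI1 : (1:ℚ) ≤ ((Is n a S).card : ℚ) := by exact_mod_cast hI
      have hF0 : (0:ℚ) ≤ ((Fs n l S).card : ℚ) := by positivity
      have hn0 : (0:ℚ) ≤ (n:ℚ) := by positivity
      nlinarith
  have hsum : (n:ℚ) ≤ ∑ S ∈ (Edges n).powerset,
      wt (Edges n) p S * (4 * ((Fs n l S).card : ℚ) + (n:ℚ) * ((Is n a S).card : ℚ)) := by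
    calc (n:ℚ) = (n:ℚ) * ∑ S ∈ (Edges n).powerset, wt (Edges n) p S := by
          rw [sum_wt]; ring
      _ = ∑ S ∈ (Edges n).powerset, wt (Edges n) p S * (n:ℚ) := by
          rw [Finset.mul_sum]
          refine Finset.sum_congr rfl fun S _ => by ring
      _ ≤ _ := by
          refine Finset.sum_le_sum fun S hS => ?_
          exact mul_le_mul_of_nonneg_left (hPhi S hS) (wt_nonneg hp0 hp1 S)
  have hsplit : ∑ S ∈ (Edges n).powerset,
      wt (Edges n) p S * (4 * ((Fs n l S).card : ℚ) + (n:ℚ) * ((Is n a S).card : ℚ))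
      = 4 * (∑ S ∈ (Edges n).powerset, wt (Edges n) p S * ((Fs n l S).card : ℚ))
        + (n:ℚ) * (∑ S ∈ (Edges n).powerset, wt (Edges n) p S * ((Is n a S).card : ℚ)) := by
    rw [Finset.mul_sum, Finset.mul_sum, ← Finset.sum_add_distrib]
    refine Finset.sum_congr rfl fun S _ => by ring
  rw [hsplit, E1, E2] at hsum
  -- final numeric contradiction
  have hfin1 : ∑ x ∈ Cands n l, p ^ (cyc x.2).card ≤ 2 * (s:ℚ) := bound1
  have hfin2 : ∑ A ∈ (univ : Finset (Fin n)).powersetCard a, (1 - p) ^ (T2 A).card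
      ≤ (2:ℚ)^n * (1/4:ℚ)^n := bound2
  have hnn : (n:ℚ) * ((2:ℚ)^n * (1/4:ℚ)^n) ≤ 1 := by
    have h2n : (n:ℚ) ≤ (2:ℚ)^n := by
      have := Nat.lt_two_pow_self (n := n)
      have : (n:ℚ) < ((2^n : ℕ) : ℚ) := by exact_mod_cast this
      push_cast at this
      linarith
    have key : (2:ℚ)^n * ((2:ℚ)^n * (1/4:ℚ)^n) = 1 := by
      rw [← mul_assoc, ← mul_pow, ← mul_pow]
      norm_num
    have hpos : (0:ℚ) ≤ (2:ℚ)^n * (1/4:ℚ)^n := by positivity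
    nlinarith
  have hIsum_nonneg : (0:ℚ) ≤ ∑ A ∈ (univ : Finset (Fin n)).powersetCard a,
      (1 - p) ^ (T2 A).card := by
    refine Finset.sum_nonneg fun A _ => ?_
    have : (0:ℚ) ≤ 1 - p := by linarith
    positivity
  have hnbig : (16:ℚ) * (k:ℚ)^2 * (s:ℚ) = (n:ℚ) := by
    rw [hn]; push_cast; ring
  have hk2 : (2:ℚ) ≤ (k:ℚ) := by exact_mod_cast hk
  have hs1 : (1:ℚ) ≤ (s:ℚ) := by
    have : (1:ℕ) ≤ s := by omega
    exact_mod_cast this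
  have hnmul : (n:ℚ) * (∑ A ∈ (univ : Finset (Fin n)).powersetCard a, (1 - p) ^ (T2 A).card)
      ≤ 1 := by
    have hn0 : (0:ℚ) ≤ (n:ℚ) := by positivity
    calc (n:ℚ) * (∑ A ∈ (univ : Finset (Fin n)).powersetCard a, (1 - p) ^ (T2 A).card)
        ≤ (n:ℚ) * ((2:ℚ)^n * (1/4:ℚ)^n) := by
          exact mul_le_mul_of_nonneg_left hfin2 hn0
      _ ≤ 1 := hnn
  have hkk : (4:ℚ) ≤ (k:ℚ)^2 := by nlinarith
  nlinarith [hsum, hfin1, hnmul, hnbig, hkk, hs1]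


end ErdosAux

open Finset ErdosAux in
set_option maxHeartbeats 1000000 in
/-- **Erdős (1959).** For all `k ≥ 2`, `l ≥ 2` there is a finite simple graph whose
chromatic number exceeds `k` and whose girth exceeds `l`. -/
theorem erdos_high_chromatic_high_girth (k l : ℕ) (hk : 2 ≤ k) (hl : 2 ≤ l) :
    ∃ (V : Type) (_ : Fintype V) (G : SimpleGraph V),
      (k : ℕ∞) < G.chromaticNumber ∧ (l : ℕ∞) < G.girth := by
  classical
  set s := l * (1024 * k^2)^l with hs_def
  set n := 16 * k^2 * s with hn_def
  set a := 8 * k * s with ha_def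
  obtain ⟨S, hSpw, hF, hI⟩ := exists_good_S k l s n a hk hl hs_def hn_def ha_def
  have hs1 : 1 ≤ s := by
    have h1 : 1 ≤ 1024 * k^2 := by nlinarith
    have h2 : 1 ≤ (1024 * k^2)^l := Nat.one_le_pow _ _ (by omega)
    have := Nat.mul_le_mul (show 1 ≤ l by omega) h2
    omega
  have hn0 : 0 < n := by
    have : 1 ≤ 16 * k^2 := by nlinarith
    have := Nat.mul_le_mul this hs1
    omega
  have hSE : S ⊆ Edges n := mem_powerset.mp hSpw
  set G0 : SimpleGraph (Fin n) := SimpleGraph.fromEdgeSet ↑S with hG0_def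
  have hadj : ∀ u v : Fin n, G0.Adj u v ↔ s(u,v) ∈ S ∧ u ≠ v := by
    intro u v
    rw [hG0_def, SimpleGraph.fromEdgeSet_adj, Finset.mem_coe]
  -- the deletion set
  set v0 : (Σ i : Fin (l+1), (Fin i.1 → Fin n)) → Fin n :=
    fun x => if h : 0 < x.1.1 then x.2 ⟨0, h⟩ else ⟨0, hn0⟩ with hv0_def
  set D : Finset (Fin n) := (Fs n l S).image v0 with hD_def
  set Vset : Set (Fin n) := ((univ \ D : Finset (Fin n)) : Set (Fin n)) with hVset_def
  set G' : SimpleGraph Vset := G0.induce Vset with hG'_def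
  have hmemV : ∀ v : Fin n, v ∈ Vset ↔ v ∉ D := by
    intro v
    rw [hVset_def]
    simp
  -- no short cycles in G'
  have hlong : ∀ (x : Vset) (w : G'.Walk x x), w.IsCycle → l < w.length := by
    intro x w hw
    by_contra hcon
    push_neg at hcon
    have h3 := hw.three_le_length
    set ι := SimpleGraph.Embedding.induce (G := G0) Vset with hι_def
    have hιinj : Function.Injective ι.toHom := ι.injective
    set w' : G0.Walk x.1 x.1 := w.map ι.toHom with hw'_def
    have hw'c : w'.IsCycle := (SimpleGraph.Walk.map_isCycle_iff_of_injective hιinj).mpr hw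
    have hlen : w'.length = w.length := SimpleGraph.Walk.length_map _ _
    set L := w.length with hL_def
    have hLl : L ≤ l := hcon
    set ff : Fin L → Fin n := fun j => w'.getVert j.1 with hff_def
    have hLw' : w'.length = L := hlen
    have hinj : Function.Injective ff := by
      intro j j' hjj
      exact Fin.ext (cycle_getVert_injOn hw'c (by omega) (by omega) hjj)
    have hedge : ∀ u v : Fin n, G0.Adj u v → s(u, v) ∈ S := fun u v h => ((hadj u v).mp h).1
    have hcycS : cyc ff ⊆ S := by
      intro e he
      simp only [cyc, mem_image, mem_univ, true_and] at he
      obtain ⟨j, rfl⟩ := he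
      have hj := j.2
      rcases Nat.lt_or_ge (j.1 + 1) L with hlt | hge
      · have hnxt : (nxt j).1 = j.1 + 1 := Nat.mod_eq_of_lt hlt
        have hadj' : G0.Adj (w'.getVert j.1) (w'.getVert (j.1 + 1)) :=
          w'.adj_getVert_succ (by omega)
        have : ff (nxt j) = w'.getVert (j.1 + 1) := by
          rw [hff_def]
          simp only []
          rw [hnxt]
        rw [show ff j = w'.getVert j.1 from rfl, this]
        exact hedge _ _ hadj'
      · have hj1 : j.1 + 1 = L := by omega
        have hnxt : (nxt j).1 = 0 := by
          simp only [nxt]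
          rw [hj1, Nat.mod_self]
        have hadj' : G0.Adj (w'.getVert j.1) (w'.getVert (j.1 + 1)) :=
          w'.adj_getVert_succ (by omega)
        have hv00 : w'.getVert (j.1 + 1) = x.1 := by
          have hgl := w'.getVert_length
          rw [hLw'] at hgl
          rw [hj1]
          exact hgl
        have hv01 : ff (nxt j) = x.1 := by
          rw [hff_def]
          simp only []
          rw [hnxt]
          exact w'.getVert_zero
        rw [hv00] at hadj'
        rw [show ff j = w'.getVert j.1 from rfl, hv01]
        exact hedge _ _ hadj'
    have hxx : (⟨⟨L, by omega⟩, ff⟩ : Σ i : Fin (l+1), (Fin i.1 → Fin n)) ∈ Fs n l S := by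
      rw [Fs, mem_filter, Cands, mem_filter]
      exact ⟨⟨mem_univ _, by simpa using h3, hinj⟩, hcycS⟩
    have hmemD : v0 ⟨⟨L, by omega⟩, ff⟩ ∈ D := by
      rw [hD_def]
      exact mem_image_of_mem v0 hxx
    have hv0x : v0 (⟨⟨L, by omega⟩, ff⟩ : Σ i : Fin (l+1), (Fin i.1 → Fin n)) = x.1 := by
      rw [hv0_def]
      have h0L : 0 < L := by omega
      simp only [dif_pos h0L]
      exact w'.getVert_zero
    rw [hv0x] at hmemD
    exact ((hmemV x.1).mp x.2) hmemD
  -- G' is not k-colorable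
  have hcard' : Fintype.card Vset = n - D.card := by
    have h1 : Fintype.card Vset = (univ \ D).card :=
      Fintype.card_of_finset' _ (fun x => by rw [hmemV]; simp)
    rw [h1, card_sdiff_of_subset (subset_univ D), card_univ, Fintype.card_fin]
  have hnotcol : ¬ G'.Colorable k := by
    intro hcol
    obtain ⟨c⟩ := hcol
    have hsum : Fintype.card Vset
        = ∑ j ∈ (univ : Finset (Fin k)), ((univ : Finset Vset).filter (fun v => c v = j)).card := by
      rw [← card_univ]
      exact Finset.card_eq_sum_card_fiberwise (fun v _ => mem_univ (c v))
    have hbig : ∃ j, a ≤ ((univ : Finset Vset).filter (fun v => c v = j)).card := by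
      by_contra hcon
      push_neg at hcon
      have hall : ∀ j ∈ (univ : Finset (Fin k)),
          ((univ : Finset Vset).filter (fun v => c v = j)).card ≤ a - 1 := by
        intro j _
        have := hcon j
        omega
      have hle := Finset.sum_le_sum hall
      rw [← hsum, Finset.sum_const, card_univ, Fintype.card_fin, smul_eq_mul] at hle
      have hDle : D.card ≤ (Fs n l S).card := card_image_le
      have hka : 2 * (k * a) = n := by rw [ha_def, hn_def]; ring
      have ha1 : 1 ≤ a := by
        have : 1 ≤ 8 * k := by omega
        have := Nat.mul_le_mul this hs1
        rw [ha_def]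
        omega
      have hkk : k * (a - 1) + k ≤ k * a := by
        have h2 : k * (a - 1) + k = k * ((a - 1) + 1) := by ring
        rw [h2, Nat.sub_add_cancel ha1]
      rw [hcard'] at hle
      omega
    obtain ⟨j, hj⟩ := hbig
    set B := (univ : Finset Vset).filter (fun v => c v = j) with hB_def
    set A0 := B.image (fun v => v.1) with hA0_def
    have hA0card : A0.card = B.card := card_image_of_injective _ Subtype.val_injective
    obtain ⟨A, hAsub, hAcard⟩ := Finset.exists_subset_card_eq
      (show a ≤ A0.card by omega)
    have hAmem : A ∈ Is n a S := by
      rw [Is, mem_filter, mem_powersetCard]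
      refine ⟨⟨subset_univ A, hAcard⟩, ?_⟩
      rw [Finset.disjoint_left]
      intro e heS heT
      rw [T2, mem_image] at heT
      obtain ⟨pr, hpr, rfl⟩ := heT
      rw [mem_offDiag] at hpr
      obtain ⟨hu, hv, hne⟩ := hpr
      obtain ⟨ub, hub, hub2⟩ := mem_image.mp (hAsub hu)
      obtain ⟨vb, hvb, hvb2⟩ := mem_image.mp (hAsub hv)
      have hadj0 : G0.Adj pr.1 pr.2 := (hadj _ _).mpr ⟨heS, hne⟩
      have hadj' : G'.Adj ub vb := by
        show G0.Adj ub.1 vb.1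
        rw [hub2, hvb2]
        exact hadj0
      have hcv := c.valid hadj'
      rw [hB_def, mem_filter] at hub hvb
      rw [hub.2, hvb.2] at hcv
      exact hcv rfl
    have : 0 < (Is n a S).card := card_pos.mpr ⟨A, hAmem⟩
    omega
  have hchrom : (k : ℕ∞) < G'.chromaticNumber := by
    by_contra hle
    push_neg at hle
    exact hnotcol (SimpleGraph.chromaticNumber_le_iff_colorable.mp hle)
  have hnotacyc : ¬ G'.IsAcyclic := by
    intro hac
    exact hnotcol ((acyclic_colorable_two hac).mono hk)
  have hgirth : (l : ℕ∞) < (G'.girth : ℕ∞) := by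
    obtain ⟨x, w, hwc, hglen⟩ := (SimpleGraph.exists_girth_eq_length).mpr hnotacyc
    have hlt := hlong x w hwc
    rw [hglen]
    exact_mod_cast hlt
  exact ⟨Vset, inferInstance, G', hchrom, hgirth⟩
end

section
/- Let n, k, p be natural numbers with p ≤ k and n < 3p. Then the graph J(n, k, k − p) is triangle-free: it contains no three pairwise adjacent vertices. -/
/-- The graph `J(n, k, t)`: vertices are the `k`-element subsets of `Fin n`,
two distinct subsets being adjacent iff their intersection has exactly `t` elements. -/
def J (n k t : ℕ) : SimpleGraph {A : Finset (Fin n) // A.card = k} :=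
  SimpleGraph.fromRel (fun A B => ((A : Finset (Fin n)) ∩ (B : Finset (Fin n))).card = t)

/-- If `p ≤ k` and `n < 3p`, then the graph `J(n, k, k - p)` is triangle-free. -/
theorem J_triangleFree (n k p : ℕ) (hpk : p ≤ k) (hnp : n < 3 * p) :
    (J n k (k - p)).CliqueFree 3 := by
  have key : ∀ A B : {A : Finset (Fin n) // A.card = k}, (J n k (k - p)).Adj A B →
      ((A : Finset (Fin n)) ∩ (B : Finset (Fin n))).card = k - p := by
    intro A B hAB
    rw [J, SimpleGraph.fromRel_adj] at hAB
    rcases hAB.2 with h | h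
    · exact h
    · rwa [Finset.inter_comm]
  intro s hs
  obtain ⟨a, b, c, hab, hac, hbc, rfl⟩ := Finset.card_eq_three.mp hs.2
  have h := hs.1
  have e1 := key a b (h (by simp) (by simp) hab)
  have e2 := key a c (h (by simp) (by simp) hac)
  have e3 := key b c (h (by simp) (by simp) hbc)
  have u1 : ((a : Finset (Fin n)) ∪ b).card + ((a : Finset (Fin n)) ∩ b).card = k + k := by
    rw [Finset.card_union_add_card_inter, a.2, b.2]
  have u2 : (((a : Finset (Fin n)) ∪ b) ∪ c).card + (((a : Finset (Fin n)) ∪ b) ∩ c).card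
      = ((a : Finset (Fin n)) ∪ b).card + k := by
    rw [Finset.card_union_add_card_inter, c.2]
  have u3 : (((a : Finset (Fin n)) ∪ b) ∩ (c : Finset (Fin n)))
      = ((a : Finset (Fin n)) ∩ c) ∪ ((b : Finset (Fin n)) ∩ c) :=
    Finset.union_inter_distrib_right _ _ _
  rw [u3] at u2
  have u4 := Finset.card_union_add_card_inter
    ((a : Finset (Fin n)) ∩ c) ((b : Finset (Fin n)) ∩ c)
  have hle : (((a : Finset (Fin n)) ∪ b) ∪ c).card ≤ n := by
    simpa using Finset.card_le_card
      (Finset.subset_univ (((a : Finset (Fin n)) ∪ b) ∪ c))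
  omega
end

section
/- Let n, k be natural numbers with k ≤ n and let p be a prime with p ≤ k such that (k : ℤ) − 2p < max 0 (2k − n). Let F be a family of k-element subsets of Fin n such that any two distinct members A, B ∈ F satisfy |A ∩ B| ≠ k − p. Then |F| ≤ ∑_{i=0}^{p−1} C(n, i), where C(n, i) denotes the binomial coefficient. -/
open Polynomial Finset Submodule

/-- Any integer polynomial of degree ≤ d is, as a function on ℕ, an integer combination
of binomial coefficients `choose · m` for `m ≤ d`. -/
lemma FW_binomial_basis (d : ℕ) : ∀ Q : Polynomial ℤ, Q.natDegree ≤ d →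
    ∃ c : ℕ → ℤ, ∀ t : ℕ, Q.eval (t : ℤ) = ∑ m ∈ Finset.range (d + 1), c m * (t.choose m : ℤ) := by
  induction d with
  | zero =>
    intro Q hQ
    refine ⟨fun _ => Q.coeff 0, fun t => ?_⟩
    rw [Polynomial.eq_C_of_natDegree_le_zero hQ]
    simp
  | succ d ih =>
    intro Q hQ
    set a := Q.coeff (d + 1) with ha
    have hdeg : (descPochhammer ℤ (d + 1)).natDegree = d + 1 := descPochhammer_natDegree ℤ (d + 1)
    have hlead : (descPochhammer ℤ (d + 1)).coeff (d + 1) = 1 := by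
      have := monic_descPochhammer ℤ (d + 1)
      rw [Monic, leadingCoeff, hdeg] at this
      exact this
    set Q' := Q - Polynomial.C a * descPochhammer ℤ (d + 1) with hQ'
    have hQ'deg : Q'.natDegree ≤ d := by
      rw [Polynomial.natDegree_le_iff_coeff_eq_zero]
      intro m hm
      rw [hQ', Polynomial.coeff_sub, Polynomial.coeff_C_mul]
      rcases eq_or_lt_of_le (Nat.succ_le_of_lt hm) with h | h
      · rw [← h, hlead, ha, mul_one, sub_self]
      · rw [Polynomial.coeff_eq_zero_of_natDegree_lt (lt_of_le_of_lt hQ h),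
          Polynomial.coeff_eq_zero_of_natDegree_lt (by rw [hdeg]; exact h), mul_zero, sub_self]
    obtain ⟨c, hc⟩ := ih Q' hQ'deg
    refine ⟨fun m => if m = d + 1 then a * (d + 1).factorial else c m, fun t => ?_⟩
    have hQeval : Q.eval (t : ℤ)
        = Q'.eval (t : ℤ) + a * (descPochhammer ℤ (d + 1)).eval (t : ℤ) := by
      rw [hQ']; simp
    have hdesc : (descPochhammer ℤ (d + 1)).eval ((t : ℕ) : ℤ) = (t.descFactorial (d + 1) : ℤ) :=
      descPochhammer_eval_eq_descFactorial ℤ t (d + 1)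
    have hdf : (t.descFactorial (d + 1) : ℤ)
        = ((d + 1).factorial : ℤ) * (t.choose (d + 1) : ℤ) := by
      rw [Nat.descFactorial_eq_factorial_mul_choose]; push_cast; ring
    rw [hQeval, hdesc, hdf, Finset.sum_range_succ]
    beta_reduce
    rw [if_pos rfl, hc t]
    have hsum : ∀ m ∈ Finset.range (d + 1),
        (if m = d + 1 then a * (d + 1).factorial else c m) * (t.choose m : ℤ)
        = c m * (t.choose m : ℤ) :=
      fun m hm => by rw [if_neg (Nat.ne_of_lt (Finset.mem_range.mp hm))]
    rw [Finset.sum_congr rfl hsum]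
    ring

/-- **Frankl–Wilson-type bound.** If `k ≤ n`, `p` is a prime with `p ≤ k` and
`(k : ℤ) − 2p < max 0 (2k − n)`, then any family `F` of `k`-element subsets of `Fin n`
in which no two distinct members intersect in exactly `k − p` elements satisfies
`|F| ≤ ∑_{i=0}^{p−1} C(n, i)`. -/
theorem linear_algebra_bound (n k p : ℕ) (hkn : k ≤ n) (hp : p.Prime) (hpk : p ≤ k)
    (hineq : (k : ℤ) - 2 * p < max 0 (2 * (k : ℤ) - n))
    (F : Finset (Finset (Fin n))) (hcard : ∀ A ∈ F, A.card = k)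
    (hint : ∀ A ∈ F, ∀ B ∈ F, A ≠ B → (A ∩ B).card ≠ k - p) :
    F.card ≤ ∑ i ∈ Finset.range p, n.choose i := by
  classical
  haveI : Fact p.Prime := ⟨hp⟩
  -- The polynomial Q(X) = ∏_{j=1}^{p-1} (X - (k - j))
  set Q : Polynomial ℤ := ∏ j ∈ Finset.Ico 1 p, (X - C ((k : ℤ) - j)) with hQdef
  have hQdeg : Q.natDegree ≤ p - 1 := by
    rw [hQdef]
    refine le_trans (Polynomial.natDegree_prod_le _ _) (le_of_eq ?_)
    calc ∑ j ∈ Finset.Ico 1 p, (X - C ((k : ℤ) - j)).natDegree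
        = ∑ _j ∈ Finset.Ico 1 p, 1 :=
          Finset.sum_congr rfl fun j _ => natDegree_X_sub_C _
      _ = p - 1 := by rw [Finset.sum_const, Nat.card_Ico, smul_eq_mul, mul_one]
  obtain ⟨c, hc⟩ := FW_binomial_basis (p - 1) Q hQdeg
  have hp1' : p - 1 + 1 = p := Nat.succ_pred_eq_of_pos hp.pos
  -- indicator functions
  set E : Finset (Fin n) → (Finset (Fin n) → ZMod p) :=
    fun S B => if S ⊆ B then 1 else 0 with hE
  set T : Finset (Finset (Fin n)) :=
    Finset.univ.filter (fun S : Finset (Fin n) => S.card < p) with hT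
  set V : Submodule (ZMod p) (Finset (Fin n) → ZMod p) :=
    Submodule.span (ZMod p) ((T.image E : Finset _) : Set _) with hV
  -- the functions g A
  set g : Finset (Fin n) → (Finset (Fin n) → ZMod p) :=
    fun A B => ((Q.eval (((A ∩ B).card : ℕ) : ℤ) : ℤ) : ZMod p) with hg
  -- each g A lies in V
  have hgV : ∀ A : Finset (Fin n), g A ∈ V := by
    intro A
    have key : g A = ∑ m ∈ Finset.range p, ((c m : ZMod p) •
        (∑ S ∈ Finset.powersetCard m A, E S)) := by
      funext B
      have h2 : ∀ m : ℕ, (∑ S ∈ Finset.powersetCard m A, E S) B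
          = (((A ∩ B).card.choose m : ℕ) : ZMod p) := by
        intro m
        rw [Finset.sum_apply]
        simp only [hE]
        rw [Finset.sum_boole]
        have hfilter : (Finset.powersetCard m A).filter (fun S => S ⊆ B)
            = Finset.powersetCard m (A ∩ B) := by
          ext S
          simp only [Finset.mem_filter, Finset.mem_powersetCard, Finset.subset_inter_iff]
          tauto
        rw [hfilter, Finset.card_powersetCard]
      have h1 : (∑ m ∈ Finset.range p, ((c m : ZMod p) •
          (∑ S ∈ Finset.powersetCard m A, E S))) B
          = ∑ m ∈ Finset.range p, (c m : ZMod p) * (((A ∩ B).card.choose m : ℕ) : ZMod p) := by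
        rw [Finset.sum_apply]
        exact Finset.sum_congr rfl fun m _ => by rw [Pi.smul_apply, h2 m, smul_eq_mul]
      rw [h1]
      have hQt := hc (A ∩ B).card
      rw [hp1'] at hQt
      simp only [hg]
      rw [hQt]
      push_cast
      rfl
    rw [key]
    refine Submodule.sum_mem _ fun m hm => Submodule.smul_mem _ _ (Submodule.sum_mem _ ?_)
    intro S hS
    refine Submodule.subset_span ?_
    simp only [Finset.coe_image, Set.mem_image, Finset.mem_coe]
    refine ⟨S, ?_, rfl⟩
    rw [hT, Finset.mem_filter]
    refine ⟨Finset.mem_univ _, ?_⟩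
    rw [Finset.mem_powersetCard] at hS
    rw [hS.2]
    exact Finset.mem_range.mp hm
  -- diagonal: g A A ≠ 0
  have hdiag : ∀ A ∈ F, g A A ≠ 0 := by
    intro A hA
    have hval : g A A = ∏ j ∈ Finset.Ico 1 p, ((j : ℕ) : ZMod p) := by
      simp only [hg, Finset.inter_self, hcard A hA, hQdef, Polynomial.eval_prod,
        Polynomial.eval_sub, Polynomial.eval_X, Polynomial.eval_C, Int.cast_prod]
      exact Finset.prod_congr rfl fun j hj => by push_cast; ring
    rw [hval, Finset.prod_ne_zero_iff]
    intro j hj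
    rw [Finset.mem_Ico] at hj
    simp only [Ne, ZMod.natCast_eq_zero_iff]
    exact Nat.not_dvd_of_pos_of_lt hj.1 hj.2
  -- off-diagonal: g A B = 0 for distinct A, B ∈ F
  have hoff : ∀ A ∈ F, ∀ B ∈ F, A ≠ B → g A B = 0 := by
    intro A hA B hB hAB
    set t := (A ∩ B).card with ht
    have htk : t ≤ k := by rw [← hcard A hA]; exact Finset.card_le_card Finset.inter_subset_left
    have htlt : t < k := by
      rcases lt_or_eq_of_le htk with h | h
      · exact h
      · exfalso
        apply hAB
        have h1 : A ∩ B = A := Finset.eq_of_subset_of_card_le Finset.inter_subset_left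
          (by rw [hcard A hA, ← h])
        have h2 : A ⊆ B := by rw [← h1]; exact Finset.inter_subset_right
        exact Finset.eq_of_subset_of_card_le h2 (by rw [hcard A hA, hcard B hB])
    -- t ≥ max 0 (2k - n) as integers
    have hlow : max 0 (2 * (k : ℤ) - n) ≤ (t : ℤ) := by
      rw [max_le_iff]
      refine ⟨Int.natCast_nonneg t, ?_⟩
      have hunion : (A ∪ B).card ≤ n := le_trans (Finset.card_le_univ _) (by simp)
      have hsum : (A ∪ B).card + (A ∩ B).card = A.card + B.card :=
        Finset.card_union_add_card_inter A B
      rw [hcard A hA, hcard B hB, ← ht] at hsum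
      omega
    -- t ≢ k (mod p)
    have hne : ((t : ZMod p)) ≠ ((k : ZMod p)) := by
      intro heq
      have hmod : t ≡ k [MOD p] := (ZMod.natCast_eq_natCast_iff _ _ _).mp heq
      have hdvd : p ∣ k - t := (Nat.modEq_iff_dvd' htk).mp hmod
      obtain ⟨s, hs⟩ := hdvd
      have hs1 : 1 ≤ s := by
        rcases Nat.eq_zero_or_pos s with h | h
        · rw [h, mul_zero] at hs
          omega
        · exact h
      rcases eq_or_lt_of_le hs1 with h | h
      · rw [← h, mul_one] at hs
        exact hint A hA B hB hAB (by omega)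
      · have h2 : 2 * p ≤ k - t := by
          rw [hs]
          calc 2 * p = p * 2 := by ring
            _ ≤ p * s := Nat.mul_le_mul_left p h
        have hle : (t : ℤ) ≤ (k : ℤ) - 2 * p := by omega
        omega
    -- produce the vanishing factor
    set d : ZMod p := (k : ZMod p) - (t : ZMod p) with hd
    have hdne : d ≠ 0 := fun h0 => hne ((sub_eq_zero.mp (hd ▸ h0)).symm)
    have hval : g A B = ∏ j ∈ Finset.Ico 1 p, ((t : ZMod p) - (k : ZMod p) + (j : ZMod p)) := by
      simp only [hg, ← ht, hQdef, Polynomial.eval_prod, Polynomial.eval_sub,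
        Polynomial.eval_X, Polynomial.eval_C, Int.cast_prod]
      exact Finset.prod_congr rfl fun j hj => by push_cast; ring
    rw [hval]
    refine Finset.prod_eq_zero (i := d.val) ?_ ?_
    · rw [Finset.mem_Ico]
      exact ⟨Nat.pos_of_ne_zero (fun h => hdne ((ZMod.val_eq_zero d).mp h)), ZMod.val_lt d⟩
    · have hcast : ((d.val : ℕ) : ZMod p) = d := by
        rw [ZMod.natCast_val, ZMod.cast_id]
      rw [hcast, hd]
      ring
  -- linear independence
  have hli : LinearIndependent (ZMod p) (fun A : {A // A ∈ F} => g A.1) := by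
    rw [Fintype.linearIndependent_iff]
    intro a ha B
    have hB := congrFun ha B.1
    rw [Finset.sum_apply] at hB
    simp only [Pi.smul_apply, smul_eq_mul, Pi.zero_apply] at hB
    have heq : ∑ A : {A // A ∈ F}, a A * g A.1 B.1 = a B * g B.1 B.1 := by
      rw [Finset.sum_eq_single B]
      · intro A _ hABne
        rw [hoff A.1 A.2 B.1 B.2 (fun h => hABne (Subtype.ext h)), mul_zero]
      · intro h; exact absurd (Finset.mem_univ B) h
    rw [heq] at hB
    exact (mul_eq_zero.mp hB).resolve_right (hdiag B.1 B.2)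
  -- counting subsets of size < p
  have hcount : T.card = ∑ i ∈ Finset.range p, n.choose i := by
    rw [hT]
    rw [Finset.card_eq_sum_card_fiberwise (f := Finset.card) (t := Finset.range p)
      (fun S hS => Finset.mem_range.mpr (Finset.mem_filter.mp hS).2)]
    refine Finset.sum_congr rfl fun i hi => ?_
    have hfib : (Finset.univ.filter (fun S : Finset (Fin n) => S.card < p)).filter
        (fun S => S.card = i) = Finset.powersetCard i (Finset.univ : Finset (Fin n)) := by
      ext S
      simp only [Finset.mem_filter, Finset.mem_powersetCard_univ, Finset.mem_univ, true_and]
      constructor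
      · exact fun h => h.2
      · intro h; exact ⟨h ▸ Finset.mem_range.mp hi, h⟩
    rw [hfib, Finset.card_powersetCard]
    simp
  -- dimension counting
  have hspan : Submodule.span (ZMod p) (Set.range (fun A : {A // A ∈ F} => g A.1)) ≤ V := by
    rw [Submodule.span_le]
    rintro _ ⟨A, rfl⟩
    exact hgV A.1
  haveI : FiniteDimensional (ZMod p) V := FiniteDimensional.span_finset (ZMod p) (T.image E)
  have h1 : Module.finrank (ZMod p) (Submodule.span (ZMod p)
      (Set.range (fun A : {A // A ∈ F} => g A.1))) = Fintype.card {A // A ∈ F} :=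
    finrank_span_eq_card hli
  have h3 : Fintype.card {A // A ∈ F} = F.card := Fintype.card_coe F
  calc F.card = Module.finrank (ZMod p) (Submodule.span (ZMod p)
        (Set.range (fun A : {A // A ∈ F} => g A.1))) := by rw [h1, h3]
    _ ≤ Module.finrank (ZMod p) V := Submodule.finrank_mono hspan
    _ ≤ (T.image E).card := finrank_span_finset_le_card _
    _ ≤ T.card := Finset.card_image_le
    _ = ∑ i ∈ Finset.range p, n.choose i := hcount
end

section
/- Let n, k be natural numbers with k ≤ n and let p be a prime with p ≤ k such that (k : ℤ) − 2p < max 0 (2k − n). Then the chromatic number of the graph J(n, k, k − p) satisfies χ(J(n, k, k − p)) · (∑_{i=0}^{p−1} C(n, i)) ≥ C(n, k), where C(n, i) denotes the binomial coefficient. -/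
open Finset


lemma cast_mul_choose (R : Type*) [CommRing R] (m j : ℕ) :
    (m : R) * (m.choose j : R) = (j+1) * (m.choose (j+1) : R) + j * (m.choose j : R) := by
  rcases le_or_gt j m with h | h
  · have := Nat.choose_succ_right_eq m j
    have hc : ((m.choose (j+1) * (j+1) : ℕ) : R) = ((m.choose j * (m - j) : ℕ) : R) := by
      exact_mod_cast congrArg _ this
    push_cast [Nat.cast_sub h] at hc
    linear_combination -hc
  · rw [Nat.choose_eq_zero_of_lt h, Nat.choose_eq_zero_of_lt (h.trans (Nat.lt_succ_self j))]
    simp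

lemma exists_binom_rep (R : Type*) [CommRing R] (a : ℕ → R) (d : ℕ) :
    ∃ c : ℕ → R, (∀ j, d < j → c j = 0) ∧
      ∀ m : ℕ, ∏ j ∈ range d, ((m : R) + a j) = ∑ j ∈ range (d+1), c j * (m.choose j : R) := by
  induction d with
  | zero =>
    refine ⟨fun j => if j = 0 then 1 else 0, fun j hj => if_neg (by omega), fun m => ?_⟩
    simp
  | succ d ih =>
    obtain ⟨c, hc0, hc⟩ := ih
    refine ⟨fun t => c t * ((t : R) + a d) + (if t = 0 then 0 else c (t-1) * t),
      fun j hj => ?_, fun m => ?_⟩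
    · have h1 : c j = 0 := hc0 j (by omega)
      have h2 : j ≠ 0 := by omega
      have h3 : c (j - 1) = 0 := hc0 (j-1) (by omega)
      simp [h1, h2, h3]
    · rw [prod_range_succ, hc m, sum_mul]
      have hsplit : ∑ t ∈ range (d+2),
          (c t * ((t : R) + a d) + (if t = 0 then 0 else c (t-1) * t)) * (m.choose t : R)
          = (∑ t ∈ range (d+2), c t * ((t : R) + a d) * (m.choose t : R))
            + ∑ t ∈ range (d+2), (if t = 0 then 0 else c (t-1) * t) * (m.choose t : R) := by
        rw [← sum_add_distrib]; exact sum_congr rfl fun t _ => by ring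
      rw [hsplit]
      rw [sum_range_succ (fun t => c t * ((t : R) + a d) * (m.choose t : R)) (d+1),
        hc0 (d+1) (Nat.lt_succ_self d)]
      rw [sum_range_succ' (fun t => (if t = 0 then 0 else c (t-1) * t) * (m.choose t : R)) (d+1)]
      simp only [if_neg (Nat.succ_ne_zero _), Nat.add_sub_cancel, if_pos trivial, zero_mul,
        add_zero, mul_zero]
      rw [← sum_add_distrib]
      refine sum_congr rfl fun j _ => ?_
      have := cast_mul_choose R m j
      push_cast
      linear_combination c j * this

lemma inter_card_ne_mod (n k p : ℕ) (hp : p.Prime)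
    (hineq : (k : ℤ) - 2 * p < max 0 (2 * (k : ℤ) - n))
    (A B : Finset (Fin n)) (hA : A.card = k) (hB : B.card = k) (hAB : A ≠ B)
    (hcap : (A ∩ B).card ≠ k - p) :
    ((A ∩ B).card : ZMod p) ≠ (k : ZMod p) := by
  set m := (A ∩ B).card with hm
  have hmle : m ≤ k := hA ▸ Finset.card_le_card Finset.inter_subset_left
  have hmk : m < k := by
    rcases lt_or_eq_of_le hmle with h | h
    · exact h
    · exfalso
      have h1 : A ∩ B = A := Finset.eq_of_subset_of_card_le Finset.inter_subset_left (by omega)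
      have h2 : A ⊆ B := by rw [← h1]; exact Finset.inter_subset_right
      exact hAB (Finset.eq_of_subset_of_card_le h2 (by omega))
  have hlb : (2 * (k:ℤ) - n) ≤ m := by
    have hu : (A ∪ B).card ≤ n := le_trans (Finset.card_le_card (Finset.subset_univ _)) (by simp)
    have := Finset.card_inter_add_card_union A B
    push_cast
    omega
  intro heq
  have hdvd : p ∣ k - m := by
    have : ((k - m : ℕ) : ZMod p) = 0 := by
      rw [Nat.cast_sub hmk.le, heq, sub_self]
    exact (ZMod.natCast_eq_zero_iff _ p).mp this
  have hpos : 0 < k - m := by omega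
  have hne : k - m ≠ p := fun h => hcap (by omega)
  have h2p : 2 * p ≤ k - m := by
    obtain ⟨t, ht⟩ := hdvd
    have h2 : 2 ≤ t := by
      by_contra h
      interval_cases t <;> omega
    have := Nat.mul_le_mul_left p h2
    omega
  have hmax : max 0 (2 * (k:ℤ) - n) ≤ m := max_le (by positivity) hlb
  have : (m : ℤ) ≤ (k : ℤ) - 2 * p := by push_cast; omega
  linarith

lemma indep_bound (n k p : ℕ) (hp : p.Prime)
    (hineq : (k : ℤ) - 2 * p < max 0 (2 * (k : ℤ) - n))
    (F : Finset (Finset (Fin n))) (hF : ∀ A ∈ F, A.card = k)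
    (hind : ∀ A ∈ F, ∀ B ∈ F, A ≠ B → (A ∩ B).card ≠ k - p) :
    F.card ≤ ∑ i ∈ Finset.range p, n.choose i := by
  haveI : Fact p.Prime := ⟨hp⟩
  set K := ZMod p
  -- the functions
  set ef : Finset (Fin n) → (↥F → K) := fun T B => if T ⊆ (B : Finset (Fin n)) then 1 else 0
    with hef
  set g : ↥F → (↥F → K) := fun A B =>
    ∏ j ∈ range (p-1), (((((A : Finset (Fin n)) ∩ (B : Finset (Fin n))).card : ℕ) : K)
      + ((j : K) + 1 - (k : K))) with hg
  -- diagonal values are nonzero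
  have hdiag : ∀ A : ↥F, g A A = ((Nat.factorial (p-1) : ℕ) : K) := by
    intro A
    rw [hg]
    simp only
    rw [Finset.inter_self, hF A.1 A.2]
    have hfac : ∀ j ∈ range (p-1), ((k:K) + ((j:K)+1-(k:K))) = (((j+(1:ℕ)) : ℕ) : K) := by
      intro j _; push_cast; ring
    rw [Finset.prod_congr rfl hfac, ← Nat.cast_prod, Finset.prod_range_add_one_eq_factorial]
  have hdiag_ne : ∀ A : ↥F, g A A ≠ 0 := by
    intro A
    rw [hdiag A, ZMod.wilsons_lemma]
    exact neg_ne_zero.mpr one_ne_zero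
  -- off-diagonal values vanish
  have hoff : ∀ A B : ↥F, A ≠ B → g A B = 0 := by
    intro A B hAB
    have hne : ((A : Finset (Fin n)) ∩ B).card ≠ k - p :=
      hind A.1 A.2 B.1 B.2 (fun h => hAB (Subtype.ext h))
    have hmod : ((((A : Finset (Fin n)) ∩ B).card : ℕ) : K) ≠ (k : K) :=
      inter_card_ne_mod n k p hp hineq A.1 B.1 (hF A.1 A.2) (hF B.1 B.2)
        (fun h => hAB (Subtype.ext h)) hne
    set m := (((A : Finset (Fin n)) ∩ B).card : ℕ)
    set u : K := (k : K) - (m : K) with hu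
    have hune : u ≠ 0 := by
      rw [hu, sub_ne_zero]
      exact fun h => hmod h.symm
    have hval : u.val ≠ 0 := fun h => hune ((ZMod.val_eq_zero u).mp h)
    have hvlt : u.val < p := u.val_lt
    refine Finset.prod_eq_zero (i := u.val - 1) (Finset.mem_range.mpr (by omega)) ?_
    have hcast : (((u.val - 1 : ℕ) : K)) = (u.val : K) - 1 := by
      rw [Nat.cast_sub (by omega)]; simp
    rw [hcast, ZMod.natCast_rightInverse u]
    rw [hu]
    ring
  -- linear independence of g
  have hli : LinearIndependent K g := by
    rw [Fintype.linearIndependent_iff]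
    intro l hl B
    have hB := congrFun hl B
    rw [Finset.sum_apply] at hB
    have hsum : ∑ A : ↥F, (l A • g A) B = l B * g B B := by
      rw [Finset.sum_eq_single B]
      · simp [smul_eq_mul]
      · intro A _ hA
        simp [hoff A B hA, smul_eq_mul]
      · intro h; exact absurd (Finset.mem_univ B) h
    rw [hsum] at hB
    rcases mul_eq_zero.mp hB with h | h
    · exact h
    · exact absurd h (hdiag_ne B)
  -- choose expansion
  have hchoose : ∀ (A : Finset (Fin n)) (B : ↥F) (j : ℕ),
      ((((A ∩ (B : Finset (Fin n))).card.choose j : ℕ)) : K)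
        = ∑ T ∈ A.powersetCard j, ef T B := by
    intro A B j
    have hset : (A ∩ (B : Finset (Fin n))).powersetCard j
        = (A.powersetCard j).filter (fun T => T ⊆ (B : Finset (Fin n))) := by
      ext T
      simp only [Finset.mem_powersetCard, Finset.mem_filter, Finset.subset_inter_iff]
      tauto
    rw [← Finset.card_powersetCard, hset, Finset.card_filter]
    push_cast
    exact (Nat.cast_sum (R := K) _ _).trans (Finset.sum_congr rfl fun T _ => by
      by_cases hT : T ⊆ (B : Finset (Fin n)) <;> simp [hT, hef])
  -- the spanning set
  set E : Finset (Finset (Fin n)) :=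
    (range p).biUnion (fun i => (Finset.univ : Finset (Fin n)).powersetCard i) with hE
  set W : Submodule K (↥F → K) := Submodule.span K ((E.image ef : Finset (↥F → K)) : Set (↥F → K))
    with hW
  obtain ⟨c, -, hc⟩ := exists_binom_rep K (fun j => ((j : K) + 1 - (k : K))) (p - 1)
  have hp1 : p - 1 + 1 = p := Nat.succ_pred_eq_of_pos hp.pos
  have hmem : ∀ A : ↥F, g A ∈ W := by
    intro A
    have hrep : g A = ∑ j ∈ range p, ∑ T ∈ (A : Finset (Fin n)).powersetCard j, c j • ef T := by
      funext B
      have := hc (((A : Finset (Fin n)) ∩ (B : Finset (Fin n))).card)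
      rw [hp1] at this
      rw [hg]
      simp only
      rw [this]
      rw [Finset.sum_apply]
      refine Finset.sum_congr rfl fun j _ => ?_
      rw [hchoose (A : Finset (Fin n)) B j, Finset.mul_sum, Finset.sum_apply]
      refine Finset.sum_congr rfl fun T _ => ?_
      simp [smul_eq_mul]
    rw [hrep]
    refine Submodule.sum_mem _ fun j hj => Submodule.sum_mem _ fun T hT => ?_
    refine Submodule.smul_mem _ _ (Submodule.subset_span ?_)
    simp only [Finset.coe_image, Set.mem_image, Finset.mem_coe]
    refine ⟨T, ?_, rfl⟩
    rw [hE]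
    rw [Finset.mem_biUnion]
    exact ⟨j, hj, Finset.mem_powersetCard.mpr
      ⟨Finset.subset_univ T, (Finset.mem_powersetCard.mp hT).2⟩⟩
  have hEcard : E.card = ∑ i ∈ range p, n.choose i := by
    rw [hE, Finset.card_biUnion]
    · refine Finset.sum_congr rfl fun i _ => ?_
      rw [Finset.card_powersetCard, Finset.card_univ, Fintype.card_fin]
    · intro i _ j _ hij
      refine Finset.disjoint_left.mpr fun T hTi hTj => hij ?_
      rw [← (Finset.mem_powersetCard.mp hTi).2, ← (Finset.mem_powersetCard.mp hTj).2]
  haveI : Module.Finite K W := by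
    rw [hW]; infer_instance
  have hli' : LinearIndependent K (fun A : ↥F => (⟨g A, hmem A⟩ : W)) := by
    apply LinearIndependent.of_comp W.subtype
    exact hli
  calc F.card = Fintype.card ↥F := (Fintype.card_coe F).symm
    _ ≤ Module.finrank K W := hli'.fintype_card_le_finrank
    _ ≤ (E.image ef).card := by
        simpa [Set.finrank] using finrank_span_finset_le_card (R := K) (E.image ef)
    _ ≤ E.card := Finset.card_image_le
    _ = ∑ i ∈ range p, n.choose i := hEcard


/-- If `k ≤ n`, `p` is a prime with `p ≤ k` and `(k : ℤ) − 2p < max 0 (2k − n)`, then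
`χ(J(n, k, k − p)) · ∑_{i=0}^{p−1} C(n, i) ≥ C(n, k)`. -/
theorem chromatic_J_lower_bound (n k p : ℕ) (hkn : k ≤ n) (hp : p.Prime) (hpk : p ≤ k)
    (hineq : (k : ℤ) - 2 * p < max 0 (2 * (k : ℤ) - n)) :
    (n.choose k : ℕ∞) ≤
      (J n k (k - p)).chromaticNumber * ((∑ i ∈ Finset.range p, n.choose i : ℕ) : ℕ∞) := by
  classical
  set G := J n k (k - p) with hG
  set S := ∑ i ∈ Finset.range p, n.choose i with hS
  have hcol : G.Colorable (ENat.toNat G.chromaticNumber) := G.colorable_chromaticNumber_of_fintype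
  set m := ENat.toNat G.chromaticNumber with hm
  have hne : G.chromaticNumber ≠ ⊤ := by
    have := (G.colorable_of_fintype).chromaticNumber_le
    exact (this.trans_lt (WithTop.coe_lt_top _)).ne
  have hcast : (m : ℕ∞) = G.chromaticNumber := ENat.coe_toNat hne
  obtain ⟨C⟩ := hcol
  have hkey : n.choose k ≤ m * S := by
    have hcardV : Fintype.card {A : Finset (Fin n) // A.card = k} = n.choose k := by
      rw [Fintype.card_subtype]
      have huniv : (Finset.univ.filter fun A : Finset (Fin n) => A.card = k)
          = (Finset.univ : Finset (Fin n)).powersetCard k := by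
        ext A; simp [Finset.mem_powersetCard]
      rw [huniv, Finset.card_powersetCard, Finset.card_univ, Fintype.card_fin]
    have hfib := Finset.card_eq_sum_card_fiberwise
      (f := C) (s := (Finset.univ : Finset {A : Finset (Fin n) // A.card = k}))
      (t := Finset.univ) (fun v _ => Finset.mem_univ _)
    have hbound : ∀ cc : Fin m,
        (Finset.univ.filter fun v : {A : Finset (Fin n) // A.card = k} => C v = cc).card ≤ S := by
      intro cc
      set Fc := (Finset.univ.filter fun v : {A : Finset (Fin n) // A.card = k} => C v = cc).image
        (fun v : {A : Finset (Fin n) // A.card = k} => (v : Finset (Fin n))) with hFc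
      have hinj := Finset.card_image_of_injective
        (Finset.univ.filter fun v : {A : Finset (Fin n) // A.card = k} => C v = cc)
        (Subtype.val_injective)
      rw [← hinj]
      apply indep_bound n k p hp hineq Fc
      · intro A hA
        obtain ⟨v, -, rfl⟩ := Finset.mem_image.mp hA
        exact v.2
      · intro A hA B hB hAB hcap
        obtain ⟨v, hv, rfl⟩ := Finset.mem_image.mp hA
        obtain ⟨w, hw, rfl⟩ := Finset.mem_image.mp hB
        have hvw : v ≠ w := fun h => hAB (congrArg _ h)
        have hadj : G.Adj v w := by
          rw [hG]
          simp only [J, SimpleGraph.fromRel_adj]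
          exact ⟨hvw, Or.inl hcap⟩
        have hval := C.valid hadj
        rw [(Finset.mem_filter.mp hv).2, (Finset.mem_filter.mp hw).2] at hval
        exact hval rfl
    calc n.choose k = Fintype.card {A : Finset (Fin n) // A.card = k} := hcardV.symm
      _ = ∑ cc : Fin m,
            (Finset.univ.filter fun v : {A : Finset (Fin n) // A.card = k} => C v = cc).card := by
          rw [← Finset.card_univ, hfib]
      _ ≤ ∑ _cc : Fin m, S := Finset.sum_le_sum fun cc _ => hbound cc
      _ = m * S := by rw [Finset.sum_const, Finset.card_univ, Fintype.card_fin, smul_eq_mul]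
  calc (n.choose k : ℕ∞) ≤ ((m * S : ℕ) : ℕ∞) := Nat.cast_le.mpr hkey
    _ = (m : ℕ∞) * (S : ℕ∞) := by push_cast; rfl
    _ = G.chromaticNumber * S := by rw [hcast]
end

section
/- Let n, l, δ be natural numbers with δ ≥ 1 and suppose (l : ℤ)² − l·n + δ·n > 0. Let F be a family of l-element subsets of Fin n such that any two distinct members A, B ∈ F satisfy |A Δ B| ≥ 2δ (symmetric difference, i.e. Hamming distance of the characteristic vectors). Then |F| ≤ ⌈(δ·n : ℚ) / (l² − l·n + δ·n)⌉. -/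
/-- **Theorem 5 (bound for constant-weight codes).** Let `δ ≥ 1` and suppose
`l² − l·n + δ·n > 0`. Then any family `F` of `l`-element subsets of `Fin n` whose
pairwise Hamming distances are at least `2δ` (i.e. `|A Δ B| ≥ 2δ` for distinct
`A, B ∈ F`) satisfies `|F| ≤ ⌈δ·n / (l² − l·n + δ·n)⌉`. -/
theorem constant_weight_code_bound (n l δ : ℕ) (hδ : 1 ≤ δ)
    (hpos : (l : ℤ) ^ 2 - l * n + δ * n > 0)
    (F : Finset (Finset (Fin n))) (hcard : ∀ A ∈ F, A.card = l)
    (hdist : ∀ A ∈ F, ∀ B ∈ F, A ≠ B → 2 * δ ≤ (symmDiff A B).card) :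
    (F.card : ℤ) ≤ ⌈((δ * n : ℚ)) / ((l : ℚ) ^ 2 - l * n + δ * n)⌉ := by
  have hDQ : (0:ℚ) < (l : ℚ) ^ 2 - l * n + δ * n := by exact_mod_cast hpos
  have hceil : (0:ℤ) ≤ ⌈((δ * n : ℚ)) / ((l : ℚ) ^ 2 - l * n + δ * n)⌉ :=
    Int.ceil_nonneg (div_nonneg (by positivity) hDQ.le)
  rcases Nat.eq_zero_or_pos F.card with hF | hF
  · rw [hF]; exact_mod_cast hceil
  -- main case
  set M : ℤ := (F.card : ℤ) with hMdef
  have hM1 : 1 ≤ M := by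
    have h : 1 ≤ F.card := hF
    rw [hMdef]; exact_mod_cast h
  set k : Fin n → ℤ := fun i => ((F.filter (fun A => i ∈ A)).card : ℤ) with hk
  -- sum of k
  have hsumk : ∑ i, k i = l * M := by
    have : ∑ i, k i = ∑ i : Fin n, ∑ A ∈ F, (if i ∈ A then (1:ℤ) else 0) := by
      apply Finset.sum_congr rfl
      intro i _
      simp [hk, Finset.sum_ite_eq, Finset.sum_boole]
    rw [this, Finset.sum_comm]
    have : ∀ A ∈ F, ∑ i : Fin n, (if i ∈ A then (1:ℤ) else 0) = (l:ℤ) := by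
      intro A hA
      rw [Finset.sum_boole]
      have : Finset.univ.filter (fun i => i ∈ A) = A := by
        ext x; simp
      rw [this, hcard A hA]
    rw [Finset.sum_congr rfl this]
    simp [hMdef, mul_comm]
  -- double counting
  have hkM : ∀ i, ∑ A ∈ F, (if i ∈ A then (0:ℤ) else 1) = M - k i := by
    intro i
    have : ∑ A ∈ F, (if i ∈ A then (0:ℤ) else 1)
        = ∑ A ∈ F, ((1:ℤ) - if i ∈ A then 1 else 0) := by
      apply Finset.sum_congr rfl; intro A _; split <;> ring
    rw [this, Finset.sum_sub_distrib]
    simp [hk, hMdef, Finset.sum_boole]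
  have hkpos : ∀ i, ∑ A ∈ F, (if i ∈ A then (1:ℤ) else 0) = k i := by
    intro i; simp [hk, Finset.sum_boole]
  have hS : ∑ A ∈ F, ∑ B ∈ F, ((symmDiff A B).card : ℤ)
      = ∑ i : Fin n, 2 * k i * (M - k i) := by
    have step1 : ∀ A ∈ F, ∀ B ∈ F, ((symmDiff A B).card : ℤ)
        = ∑ i : Fin n, ((if i ∈ A then (1:ℤ) else 0) * (if i ∈ B then 0 else 1)
          + (if i ∈ A then (0:ℤ) else 1) * (if i ∈ B then 1 else 0)) := by
      intro A _ B _
      have : ((symmDiff A B).card : ℤ)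
          = ∑ i : Fin n, (if i ∈ symmDiff A B then (1:ℤ) else 0) := by
        rw [Finset.sum_boole]
        congr 1
        have : Finset.univ.filter (fun i => i ∈ symmDiff A B) = symmDiff A B := by
          ext x; simp
        rw [this]
      rw [this]
      apply Finset.sum_congr rfl
      intro i _
      by_cases hA : i ∈ A <;> by_cases hB : i ∈ B <;>
        simp [Finset.mem_symmDiff, hA, hB]
    calc ∑ A ∈ F, ∑ B ∈ F, ((symmDiff A B).card : ℤ)
        = ∑ A ∈ F, ∑ B ∈ F, ∑ i : Fin n,
            ((if i ∈ A then (1:ℤ) else 0) * (if i ∈ B then 0 else 1)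
            + (if i ∈ A then (0:ℤ) else 1) * (if i ∈ B then 1 else 0)) := by
          apply Finset.sum_congr rfl; intro A hA
          apply Finset.sum_congr rfl; intro B hB
          exact step1 A hA B hB
      _ = ∑ A ∈ F, ∑ i : Fin n, ∑ B ∈ F,
            ((if i ∈ A then (1:ℤ) else 0) * (if i ∈ B then 0 else 1)
            + (if i ∈ A then (0:ℤ) else 1) * (if i ∈ B then 1 else 0)) :=
          Finset.sum_congr rfl fun A _ => Finset.sum_comm
      _ = ∑ i : Fin n, ∑ A ∈ F, ∑ B ∈ F,
            ((if i ∈ A then (1:ℤ) else 0) * (if i ∈ B then 0 else 1)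
            + (if i ∈ A then (0:ℤ) else 1) * (if i ∈ B then 1 else 0)) :=
          Finset.sum_comm
      _ = ∑ i : Fin n, 2 * k i * (M - k i) := by
          apply Finset.sum_congr rfl; intro i _
          rw [show ∀ f g : Finset (Fin n) → ℤ, ∑ A ∈ F, ∑ B ∈ F, (f A * g B + g A * f B)
              = (∑ A ∈ F, f A) * (∑ B ∈ F, g B) + (∑ A ∈ F, g A) * (∑ B ∈ F, f B) from ?_]
          · rw [hkpos i, hkM i]; ring
          · intro f g
            simp only [Finset.sum_add_distrib, ← Finset.sum_mul, ← Finset.mul_sum]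
  -- lower bound
  have hlow : 2 * δ * M * (M - 1) ≤ ∑ A ∈ F, ∑ B ∈ F, ((symmDiff A B).card : ℤ) := by
    have hrow : ∀ A ∈ F, 2 * δ * (M - 1) ≤ ∑ B ∈ F, ((symmDiff A B).card : ℤ) := by
      intro A hA
      have h1 : ∑ B ∈ F, ((symmDiff A B).card : ℤ)
          = ∑ B ∈ F.erase A, ((symmDiff A B).card : ℤ) := by
        rw [← Finset.add_sum_erase F _ hA]
        simp
      rw [h1]
      have h2 : ((F.erase A).card : ℤ) * (2 * (δ:ℤ)) ≤ ∑ B ∈ F.erase A, ((symmDiff A B).card : ℤ) := by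
        have := Finset.card_nsmul_le_sum (F.erase A)
          (fun B => ((symmDiff A B).card : ℤ)) (2 * (δ:ℤ)) ?_
        · simpa [nsmul_eq_mul] using this
        · intro B hB
          have hBF : B ∈ F := Finset.mem_of_mem_erase hB
          have hne : A ≠ B := fun h => (Finset.ne_of_mem_erase hB) h.symm
          show (2 * (δ:ℤ)) ≤ ((symmDiff A B).card : ℤ)
          exact_mod_cast hdist A hA B hBF hne
      have h3 : ((F.erase A).card : ℤ) = M - 1 := by
        rw [Finset.card_erase_of_mem hA]
        have : (1:ℕ) ≤ F.card := hF
        push_cast [this]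
        ring
      calc 2 * (δ:ℤ) * (M - 1) = ((F.erase A).card : ℤ) * (2 * (δ:ℤ)) := by
            rw [h3]; ring
        _ ≤ _ := h2
    calc 2 * (δ:ℤ) * M * (M - 1) = (F.card : ℤ) * (2 * (δ:ℤ) * (M - 1)) := by
          rw [← hMdef]; ring
      _ ≤ ∑ A ∈ F, ∑ B ∈ F, ((symmDiff A B).card : ℤ) := by
          have := Finset.card_nsmul_le_sum F
            (fun A => ∑ B ∈ F, ((symmDiff A B).card : ℤ)) (2 * (δ:ℤ) * (M - 1)) hrow
          simpa [nsmul_eq_mul] using this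
  -- Cauchy/Chebyshev
  have hcs : (∑ i, k i) ^ 2 ≤ (n : ℤ) * ∑ i, k i ^ 2 := by
    have := sq_sum_le_card_mul_sum_sq (s := (Finset.univ : Finset (Fin n))) (f := k)
    simpa using this
  -- combine
  have hupper : (n:ℤ) * ∑ i : Fin n, 2 * k i * (M - k i)
      ≤ 2 * (M ^ 2 * l * n - l ^ 2 * M ^ 2) := by
    have expand : ∑ i : Fin n, 2 * k i * (M - k i)
        = 2 * M * (∑ i, k i) - 2 * (∑ i, k i ^ 2) := by
      rw [Finset.sum_congr rfl
        (fun i _ => (by ring : 2 * k i * (M - k i) = 2 * M * k i - 2 * k i ^ 2)),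
        Finset.sum_sub_distrib, ← Finset.mul_sum, ← Finset.mul_sum]
    have hcs' : ((l:ℤ) * M) ^ 2 ≤ (n:ℤ) * ∑ i, k i ^ 2 := by
      rw [← hsumk]; exact hcs
    rw [expand, mul_sub, hsumk]
    nlinarith [hcs']
  have hn0 : (0:ℤ) ≤ (n:ℤ) := by positivity
  have hchain : 2 * δ * M * (M - 1) * n ≤ 2 * (M ^ 2 * l * n - l ^ 2 * M ^ 2) := by
    calc 2 * (δ:ℤ) * M * (M - 1) * n
        = (n:ℤ) * (2 * δ * M * (M - 1)) := by ring
      _ ≤ (n:ℤ) * ∑ A ∈ F, ∑ B ∈ F, ((symmDiff A B).card : ℤ) :=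
          mul_le_mul_of_nonneg_left hlow hn0
      _ = (n:ℤ) * ∑ i : Fin n, 2 * k i * (M - k i) := by rw [hS]
      _ ≤ _ := hupper
  -- cancel M
  have hMpos : (0:ℤ) < M := hM1
  have hkey : M * ((l:ℤ)^2 - l * n + δ * n) ≤ δ * n := by
    nlinarith [hchain, hMpos]
  -- finish
  have hQ : (M : ℚ) ≤ ((δ * n : ℚ)) / ((l : ℚ) ^ 2 - l * n + δ * n) := by
    rw [le_div_iff₀ hDQ]
    have : ((M * ((l:ℤ)^2 - l * n + δ * n) : ℤ) : ℚ) ≤ ((δ * n : ℤ) : ℚ) := by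
      exact_mod_cast hkey
    push_cast at this ⊢
    linarith
  have := hQ.trans (Int.le_ceil _)
  exact_mod_cast this
end

section
/- Let G be a simple graph on a finite vertex type, let α ≥ 1 be a natural number such that every independent set of vertices of G has size at most α, and let W be a finite set of vertices with |W| = l and l ≥ 2α. Then the number of edges of G having both endpoints in W is at least l²/(4α). -/
open Finset

private lemma edges_key_finset {V : Type*} [Fintype V] [DecidableEq V]
    (G : SimpleGraph V) [DecidableRel G.Adj] (α : ℕ)
    (hind : ∀ s : Finset V, (∀ x ∈ s, ∀ y ∈ s, ¬G.Adj x y) → s.card ≤ α)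
    (W : Finset V) :
    W.card * W.card ≤
      2 * α * (Finset.univ.filter
          (fun e : Sym2 V => e ∈ G.edgeSet ∧ ∀ x ∈ e, x ∈ W)).card
        + α * W.card := by
  induction W using Finset.strongInduction with
  | _ W ih =>
    rcases W.eq_empty_or_nonempty with rfl | hWne
    · simp
    -- choose a maximal independent subset S of W
    set 𝒮 : Finset (Finset V) :=
      (W.powerset).filter (fun S => ∀ x ∈ S, ∀ y ∈ S, ¬G.Adj x y) with h𝒮
    have hne : 𝒮.Nonempty := ⟨∅, by simp [h𝒮]⟩
    obtain ⟨S, hS, hSmax⟩ := 𝒮.exists_maximal hne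
    rw [h𝒮, Finset.mem_filter, Finset.mem_powerset] at hS
    obtain ⟨hSW, hSindep⟩ := hS
    have hsα : S.card ≤ α := hind S hSindep
    -- every vertex of W \ S has a neighbour in S
    have hadj : ∀ v ∈ W \ S, ∃ u ∈ S, G.Adj u v := by
      intro v hv
      rw [Finset.mem_sdiff] at hv
      by_contra hc
      push_neg at hc
      have hmem : insert v S ∈ 𝒮 := by
        rw [h𝒮, Finset.mem_filter, Finset.mem_powerset]
        refine ⟨Finset.insert_subset hv.1 hSW, ?_⟩
        intro x hx y hy hxy
        rcases Finset.mem_insert.1 hx with hx' | hx'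
        · rcases Finset.mem_insert.1 hy with hy' | hy'
          · exact G.irrefl (hx' ▸ hy' ▸ hxy)
          · exact hc y hy' (G.adj_symm (hx' ▸ hxy))
        · rcases Finset.mem_insert.1 hy with hy' | hy'
          · exact hc x hx' (hy' ▸ hxy)
          · exact hSindep x hx' y hy' hxy
      exact hv.2 (hSmax hmem (Finset.subset_insert _ _) (Finset.mem_insert_self _ _))
    have hSne : S.Nonempty := by
      obtain ⟨w, hw⟩ := hWne
      by_cases h : w ∈ S
      · exact ⟨w, h⟩
      · obtain ⟨u, hu, _⟩ := hadj w (Finset.mem_sdiff.2 ⟨hw, h⟩)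
        exact ⟨u, hu⟩
    set E : Finset V → Finset (Sym2 V) := fun U =>
       Finset.univ.filter (fun e : Sym2 V => e ∈ G.edgeSet ∧ ∀ x ∈ e, x ∈ U) with hE
    have hsub : E (W \ S) ⊆ E W := by
      intro e he
      rw [hE, Finset.mem_filter] at he ⊢
      exact ⟨he.1, he.2.1, fun x hx => (Finset.mem_sdiff.1 (he.2.2 x hx)).1⟩
    -- injection from W \ S into E W \ E (W \ S)
    set f : V → Sym2 V := fun v =>
      if hv : v ∈ W \ S then s((hadj v hv).choose, v) else s(v, v) with hf
    have hmap : ∀ v ∈ W \ S, f v ∈ E W \ E (W \ S) := by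
      intro v hv
      obtain ⟨hu, hadjuv⟩ := (hadj v hv).choose_spec
      rw [Finset.mem_sdiff]
      constructor
      · rw [hE, Finset.mem_filter, hf]
        simp only [dif_pos hv]
        refine ⟨Finset.mem_univ _, hadjuv, ?_⟩
        intro x hx
        rcases Sym2.mem_iff.1 hx with rfl | rfl
        · exact hSW hu
        · exact (Finset.mem_sdiff.1 hv).1
      · rw [hE, Finset.mem_filter, hf]
        simp only [dif_pos hv]
        intro h
        have := h.2.2 (hadj v hv).choose (Sym2.mem_mk_left _ _)
        exact (Finset.mem_sdiff.1 this).2 hu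
    have hinj : Set.InjOn f (W \ S : Finset V) := by
      intro v hv v' hv' hfv
      rw [Finset.mem_coe] at hv hv'
      rw [hf] at hfv
      simp only [dif_pos hv, dif_pos hv'] at hfv
      rw [Sym2.eq_iff] at hfv
      rcases hfv with ⟨_, rfl⟩ | ⟨h1, h2⟩
      · rfl
      · exfalso
        obtain ⟨hu', _⟩ := (hadj v' hv').choose_spec
        exact (Finset.mem_sdiff.1 hv).2 (h2.symm ▸ hu')
    have hcard1 : (W \ S).card ≤ (E W \ E (W \ S)).card :=
      Finset.card_le_card_of_injOn f hmap hinj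
    have hcard2 : (E W \ E (W \ S)).card = (E W).card - (E (W \ S)).card :=
      Finset.card_sdiff_of_subset hsub
    have hcard3 : (E (W \ S)).card ≤ (E W).card := Finset.card_le_card hsub
    have hEW : (E (W \ S)).card + (W \ S).card ≤ (E W).card := by omega
    have hIH := ih (W \ S) (Finset.sdiff_ssubset hSW hSne)
    have hcardWS : (W \ S).card = W.card - S.card := Finset.card_sdiff_of_subset hSW
    have hsW : S.card ≤ W.card := Finset.card_le_card hSW
    have hs1 : 1 ≤ S.card := hSne.card_pos
    -- arithmetic
    set n := W.card
    set s := S.card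
    set m := (W \ S).card
    set e' := (E (W \ S)).card
    set ew := (E W).card
    have hns : n = m + s := by omega
    have hkey : s * (2 * m + s) ≤ α * (2 * m + s) :=
      Nat.mul_le_mul_right _ hsα
    change n * n ≤ 2 * α * ew + α * n
    rw [hns]
    nlinarith [hIH, hEW, hkey]

private lemma edges_key {V : Type*} [Fintype V]
    (G : SimpleGraph V) (α : ℕ)
    (hind : ∀ s : Finset V, (∀ x ∈ s, ∀ y ∈ s, ¬G.Adj x y) → s.card ≤ α)
    (W : Finset V) :
    W.card * W.card ≤ 2 * α * {e ∈ G.edgeSet | ∀ x ∈ e, x ∈ W}.ncard + α * W.card := by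
  classical
  have hset : {e ∈ G.edgeSet | ∀ x ∈ e, x ∈ W} =
      ↑(Finset.univ.filter (fun e : Sym2 V => e ∈ G.edgeSet ∧ ∀ x ∈ e, x ∈ W)) := by
    ext e
    simp [Set.mem_setOf_eq]
  rw [hset, Set.ncard_coe_finset]
  exact edges_key_finset G α hind W

/-- If every independent set of a finite graph `G` has at most `α ≥ 1` vertices and
`W` is a set of `l ≥ 2α` vertices, then the number of edges of `G` with both endpoints
in `W` is at least `l²/(4α)`. -/
theorem edges_in_large_set (V : Type*) [Fintype V] (G : SimpleGraph V) (α : ℕ) (hα : 1 ≤ α)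
    (hind : ∀ s : Finset V, (∀ x ∈ s, ∀ y ∈ s, ¬G.Adj x y) → s.card ≤ α)
    (W : Finset V) (l : ℕ) (hW : W.card = l) (hl : 2 * α ≤ l) :
    ((l : ℝ) ^ 2 / (4 * α)) ≤ {e ∈ G.edgeSet | ∀ x ∈ e, x ∈ W}.ncard := by
  have key := edges_key G α hind W
  rw [hW] at key
  set E := {e ∈ G.edgeSet | ∀ x ∈ e, x ∈ W}.ncard
  have h1 : (l : ℝ) * l ≤ 2 * α * E + α * l := by exact_mod_cast key
  have h2 : 2 * (α : ℝ) ≤ l := by exact_mod_cast hl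
  have hα' : (1 : ℝ) ≤ α := by exact_mod_cast hα
  have hl0 : (0 : ℝ) ≤ l := Nat.cast_nonneg l
  rw [div_le_iff₀ (by positivity)]
  nlinarith [mul_nonneg (sub_nonneg.2 h2) hl0]
end
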